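/- arXiv:2211.08786 — 9 statements merged into one kernel-verified Lean document; each statement's English description precedes it below -/
import Mathlib

section
/- Let n ≥ 1, C ∈ ℝ^{1×n}, θ ∈ ℝ, let 𝒜 : ℝ → ℝ^{n×n} be continuous, X a fundamental solution with transition matrix Φ(t,s) = X(s)X(t)⁻¹, and let S : [t₀,∞) → ℝ^{n×n} be differentiable with S(t₀) = S₀ and S'(t) = −𝒜(t)ᵀS(t) − S(t)𝒜(t) − θS(t) + CᵀC for all t ≥ t₀. Then for every t ≥ t₀, S(t) = e^{−θ(t−t₀)} Φ(t,t₀)ᵀ S₀ Φ(t,t₀) + ∫_{t₀}^{t} e^{−θ(t−s)} Φ(t,s)ᵀ CᵀC Φ(t,s) ds (variation of constants formula). -/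
/-! With `F(τ) = e^{θτ} X(τ)ᵀ S(τ) X(τ)`, the product rule and `X' = 𝒜X` make the terms
`-𝒜ᵀS - S𝒜` of the Lyapunov equation cancel against the derivatives of `Xᵀ` and `X`, and `-θS`
against that of the exponential, leaving `F' = e^{θτ} Xᵀ CᵀC X`. Integrating from `t₀` to `t` and
conjugating back with `X(t)⁻¹` gives the formula, since `Φ(t,s) = X(s) X(t)⁻¹`. -/

open Matrix Set

-- This norm makes square matrices a normed `ℝ`-algebra, as the product rule needs; derivatives and
-- integrals do not depend on the choice of norm.
open scoped Matrix.Norms.Operator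

section Entrywise

variable {m n : Type*} [Fintype n]

theorem hasDerivWithinAt_matrix {f : ℝ → Matrix m n ℝ} {f' : Matrix m n ℝ} {s : Set ℝ} {t : ℝ} :
    HasDerivWithinAt f f' s t ↔ ∀ i j, HasDerivWithinAt (fun τ => f τ i j) (f' i j) s t :=
  hasDerivWithinAt_pi.trans (forall_congr' fun _ => hasDerivWithinAt_pi)

theorem hasDerivAt_matrix {f : ℝ → Matrix m n ℝ} {f' : Matrix m n ℝ} {t : ℝ} :
    HasDerivAt f f' t ↔ ∀ i j, HasDerivAt (fun τ => f τ i j) (f' i j) t :=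
  hasDerivAt_pi.trans (forall_congr' fun _ => hasDerivAt_pi)

theorem HasDerivWithinAt.matrix_transpose [Fintype m] {f : ℝ → Matrix m n ℝ}
    {f' : Matrix m n ℝ} {s : Set ℝ} {t : ℝ} (h : HasDerivWithinAt f f' s t) :
    HasDerivWithinAt (fun τ => (f τ)ᵀ) f'ᵀ s t :=
  hasDerivWithinAt_matrix.2 fun i j => hasDerivWithinAt_matrix.1 h j i

-- `IntervalIntegrable` cannot be stated for `Matrix`: its topology instance does not unify
-- reducibly with the one coming from the norm.
theorem intervalIntegral_matrix_apply [Fintype m] {f : ℝ → Matrix m n ℝ} {a b : ℝ}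
    (hf : Continuous f) (i : m) (j : n) : (∫ s in a..b, f s) i j = ∫ s in a..b, f s i j :=
  ((LinearMap.toContinuousLinearMap (entryLinearMap ℝ ℝ i j)).intervalIntegral_comp_comm
    (hf.intervalIntegrable a b)).symm

end Entrywise

theorem intervalIntegral_mul_mul {𝔸 : Type*} [NormedRing 𝔸] [NormedAlgebra ℝ 𝔸] [CompleteSpace 𝔸]
    {f : ℝ → 𝔸} {a b : ℝ} (hf : IntervalIntegrable f MeasureTheory.volume a b) (c d : 𝔸) :
    ∫ x in a..b, c * f x * d = c * (∫ x in a..b, f x) * d := by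
  have := ((ContinuousLinearMap.mul ℝ 𝔸 c).comp
    ((ContinuousLinearMap.mul ℝ 𝔸).flip d)).intervalIntegral_comp_comm hf
  simpa [mul_assoc] using this

section Lyapunov

variable {n : Type*} [Fintype n] [DecidableEq n] {A X S : ℝ → Matrix n n ℝ} {Q : Matrix n n ℝ}
  {θ : ℝ}

theorem hasDerivWithinAt_exp_smul_congr_of_lyapunov {s : Set ℝ} {t : ℝ}
    (hX : HasDerivWithinAt X (A t * X t) s t)
    (hS : HasDerivWithinAt S (-(A t)ᵀ * S t - S t * A t - θ • S t + Q) s t) :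
    HasDerivWithinAt (fun τ => Real.exp (θ * τ) • ((X τ)ᵀ * S τ * X τ))
      (Real.exp (θ * t) • ((X t)ᵀ * Q * X t)) s t := by
  have hexp : HasDerivAt (fun τ => Real.exp (θ * τ)) (Real.exp (θ * t) * θ) t := by
    simpa using ((hasDerivAt_id t).const_mul θ).exp
  refine (hexp.hasDerivWithinAt.smul ((hX.matrix_transpose.fun_mul hS).fun_mul hX)).congr_deriv ?_
  simp only [transpose_mul, Matrix.add_mul, Matrix.sub_mul, Matrix.neg_mul, Matrix.mul_add,
    Matrix.mul_sub, Matrix.mul_neg, Matrix.smul_mul, Matrix.mul_smul, Matrix.mul_assoc, smul_add,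
    smul_sub, smul_neg, smul_smul]
  abel

theorem exp_smul_congr_eq_add_integral_of_lyapunov {t₀ t : ℝ} (ht : t₀ ≤ t)
    (hX : ∀ τ, HasDerivAt X (A τ * X τ) τ)
    (hS : ∀ τ ∈ Ici t₀,
      HasDerivWithinAt S (-(A τ)ᵀ * S τ - S τ * A τ - θ • S τ + Q) (Ici t₀) τ) :
    Real.exp (θ * t) • ((X t)ᵀ * S t * X t) = Real.exp (θ * t₀) • ((X t₀)ᵀ * S t₀ * X t₀) +
      ∫ s in t₀..t, Real.exp (θ * s) • ((X s)ᵀ * Q * X s) := by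
  have hF := fun τ hτ =>
    hasDerivWithinAt_exp_smul_congr_of_lyapunov (hX τ).hasDerivWithinAt (hS τ hτ)
  have hXc : Continuous X := continuous_iff_continuousAt.2 fun τ => (hX τ).continuousAt
  have hint : Continuous fun s => Real.exp (θ * s) • ((X s)ᵀ * Q * X s) := by fun_prop
  rw [intervalIntegral.integral_eq_sub_of_hasDeriv_right_of_le ht
    (fun τ hτ => (hF τ hτ.1).continuousWithinAt.mono Icc_subset_Ici_self)
    (fun τ hτ => ((hF τ hτ.1.le).hasDerivAt (Ici_mem_nhds hτ.1)).hasDerivWithinAt)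
    (hint.intervalIntegrable _ _)]
  abel

theorem lyapunov_variation_of_constants_matrix {t₀ t : ℝ} (ht : t₀ ≤ t)
    (hX : ∀ τ, HasDerivAt X (A τ * X τ) τ) (hXt : IsUnit (X t))
    (hS : ∀ τ ∈ Ici t₀,
      HasDerivWithinAt S (-(A τ)ᵀ * S τ - S τ * A τ - θ • S τ + Q) (Ici t₀) τ) :
    S t = Real.exp (-θ * (t - t₀)) • ((X t₀ * (X t)⁻¹)ᵀ * S t₀ * (X t₀ * (X t)⁻¹)) +
      ∫ s in t₀..t, Real.exp (-θ * (t - s)) • ((X s * (X t)⁻¹)ᵀ * Q * (X s * (X t)⁻¹)) := by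
  set Y := (X t)⁻¹
  have hXY : X t * Y = 1 := mul_nonsing_inv _ ((isUnit_iff_isUnit_det _).1 hXt)
  have hXc : Continuous X := continuous_iff_continuousAt.2 fun τ => (hX τ).continuousAt
  have conj (s : ℝ) (M : Matrix n n ℝ) :
      Real.exp (-θ * t) • (Yᵀ * (Real.exp (θ * s) • ((X s)ᵀ * M * X s)) * Y) =
        Real.exp (-θ * (t - s)) • ((X s * Y)ᵀ * M * (X s * Y)) := by
    rw [Matrix.mul_smul, Matrix.smul_mul, smul_smul, ← Real.exp_add]
    simp only [transpose_mul, Matrix.mul_assoc]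
    ring_nf
  calc S t = Real.exp (-θ * t) • (Yᵀ * (Real.exp (θ * t) • ((X t)ᵀ * S t * X t)) * Y) := by
        rw [conj, hXY]; simp
    _ = _ := by
        rw [exp_smul_congr_eq_add_integral_of_lyapunov ht hX hS, Matrix.mul_add, Matrix.add_mul,
          smul_add, conj, ← intervalIntegral_mul_mul
          ((by fun_prop : Continuous _).intervalIntegrable _ _), ← intervalIntegral.integral_smul]
        simp only [conj]

end Lyapunov

theorem lyapunov_variation_of_constants_general
    {n : ℕ} (C : Matrix (Fin 1) (Fin n) ℝ) (θ : ℝ)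
    (𝒜 X : ℝ → Matrix (Fin n) (Fin n) ℝ)
    (hX : ∀ t : ℝ, ∀ i j, HasDerivAt (fun τ => X τ i j) ((𝒜 t * X t) i j) t)
    (hXinv : ∀ t : ℝ, IsUnit (X t))
    (t₀ : ℝ) (S : ℝ → Matrix (Fin n) (Fin n) ℝ) (S₀ : Matrix (Fin n) (Fin n) ℝ)
    (hS₀ : S t₀ = S₀)
    (hS : ∀ t ∈ Set.Ici t₀, ∀ i j, HasDerivWithinAt (fun τ => S τ i j)
      ((-(𝒜 t)ᵀ * S t - S t * 𝒜 t - θ • S t + Cᵀ * C) i j) (Set.Ici t₀) t) :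
    ∀ t ∈ Set.Ici t₀,
      S t = Real.exp (-θ * (t - t₀)) • ((X t₀ * (X t)⁻¹)ᵀ * S₀ * (X t₀ * (X t)⁻¹))
        + Matrix.of (fun i j => ∫ s in t₀..t,
            Real.exp (-θ * (t - s)) *
              (((X s * (X t)⁻¹)ᵀ * Cᵀ * C * (X s * (X t)⁻¹)) i j)) := by
  intro t ht
  have hX' (τ : ℝ) : HasDerivAt X (𝒜 τ * X τ) τ := hasDerivAt_matrix.2 (hX τ)
  have hXc : Continuous X := continuous_iff_continuousAt.2 fun τ => (hX' τ).continuousAt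
  rw [← hS₀, lyapunov_variation_of_constants_matrix ht hX' (hXinv t)
    (fun τ hτ => hasDerivWithinAt_matrix.2 (hS τ hτ))]
  congr 1
  ext i j
  rw [intervalIntegral_matrix_apply (by fun_prop)]
  simp only [Matrix.mul_assoc]
  rfl

/-- Variation of constants formula for the Lyapunov differential equation
`S' = −𝒜ᵀS − S𝒜 − θS + CᵀC` on `[t₀,∞)`:
`S(t) = e^{−θ(t−t₀)} Φ(t,t₀)ᵀ S₀ Φ(t,t₀) + ∫_{t₀}^{t} e^{−θ(t−s)} Φ(t,s)ᵀ CᵀC Φ(t,s) ds`,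
where `Φ(t,s) = X(s) X(t)⁻¹` is the transition matrix. -/
theorem lyapunov_variation_of_constants
    {n : ℕ} (hn : 1 ≤ n) (C : Matrix (Fin 1) (Fin n) ℝ) (θ : ℝ)
    (𝒜 X : ℝ → Matrix (Fin n) (Fin n) ℝ)
    (h𝒜 : Continuous 𝒜)
    (hX : ∀ t : ℝ, ∀ i j, HasDerivAt (fun τ => X τ i j) ((𝒜 t * X t) i j) t)
    (hXinv : ∀ t : ℝ, IsUnit (X t))
    (t₀ : ℝ) (S : ℝ → Matrix (Fin n) (Fin n) ℝ) (S₀ : Matrix (Fin n) (Fin n) ℝ)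
    (hS₀ : S t₀ = S₀)
    (hS : ∀ t ∈ Set.Ici t₀, ∀ i j, HasDerivWithinAt (fun τ => S τ i j)
      ((-(𝒜 t)ᵀ * S t - S t * 𝒜 t - θ • S t + Cᵀ * C) i j) (Set.Ici t₀) t) :
    ∀ t ∈ Set.Ici t₀,
      S t = Real.exp (-θ * (t - t₀)) • ((X t₀ * (X t)⁻¹)ᵀ * S₀ * (X t₀ * (X t)⁻¹))
        + Matrix.of (fun i j => ∫ s in t₀..t,
            Real.exp (-θ * (t - s)) *
              (((X s * (X t)⁻¹)ᵀ * Cᵀ * C * (X s * (X t)⁻¹)) i j)) :=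
  lyapunov_variation_of_constants_general C θ 𝒜 X hX hXinv t₀ S S₀ hS₀ hS
end

section
/- Let n ≥ 1, C ∈ ℝ^{1×n}, θ ∈ ℝ, let 𝒜 : ℝ → ℝ^{n×n} be continuous, and let S : [t₀,∞) → ℝ^{n×n} be differentiable with S'(t) = −𝒜(t)ᵀS(t) − S(t)𝒜(t) − θS(t) + CᵀC for all t ≥ t₀. If S(t₀) is symmetric positive definite, then S(t) is symmetric positive definite for every t ≥ t₀. -/
/-!
Replacing `𝒜` by `𝔅 = 𝒜 + (θ / 2) • 1` removes the gain: `S' = -𝔅ᵀS - S𝔅 + CᵀC`.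
Then `S - Sᵀ` solves a homogeneous linear equation and vanishes at `t₀`, so `S` stays symmetric.
For `x ≠ 0` and `t₁ ≥ t₀`, solve `y' = 𝔅 y` backwards from `y t₁ = x`. Along `y` the form
`yᵀ S y` has derivative `(C y)² ≥ 0`, and `y t₀ ≠ 0` by uniqueness, so
`xᵀ S(t₁) x ≥ y(t₀)ᵀ S(t₀) y(t₀) > 0`.
-/

open Matrix Set
open scoped NNReal

-- With the entrywise sup norm, a matrix-valued derivative is the entrywise one.
attribute [local instance] Matrix.normedAddCommGroup Matrix.normedSpace

theorem IsCompact.exists_nnnorm_le_of_continuousOn {α F : Type*} [TopologicalSpace α]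
    [SeminormedAddCommGroup F] {s : Set α} {f : α → F} (hs : IsCompact s)
    (hf : ContinuousOn f s) : ∃ K : ℝ≥0, ∀ x ∈ s, ‖f x‖₊ ≤ K := by
  obtain ⟨K, hK⟩ := hs.exists_bound_of_continuousOn hf
  exact ⟨K.toNNReal, fun x hx => by
    rw [← NNReal.coe_le_coe, coe_nnnorm]; exact (hK x hx).trans (Real.le_coe_toNNReal K)⟩

section LinearODE

variable {E : Type*} [NormedAddCommGroup E] [NormedSpace ℝ E] {A : ℝ → E →L[ℝ] E} {a b : ℝ}

theorem IsIntegralCurveOn.eqOn_zero_of_clm {γ : ℝ → E} (hA : ContinuousOn A (Icc a b))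
    (hγ : IsIntegralCurveOn γ (fun t => A t) (Icc a b)) (ha : γ a = 0) :
    EqOn γ 0 (Icc a b) := by
  obtain ⟨K, hK⟩ := isCompact_Icc.exists_nnnorm_le_of_continuousOn hA
  have hzero : IsIntegralCurve (fun _ => (0 : E)) (fun t => A t) :=
    isIntegralCurve_const fun t => map_zero (A t)
  exact ODE_solution_unique_of_mem_Icc_right (s := fun _ => univ)
    (fun t ht => ((A t).lipschitz.weaken (hK t (Ico_subset_Icc_self ht))).lipschitzOnWith)
    hγ.continuousOn
    (fun t ht =>
      (hγ t (Ico_subset_Icc_self ht)).mono_of_mem_nhdsWithin (Icc_mem_nhdsGE_of_mem ht))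
    (fun _ _ => trivial) continuousOn_const (fun t _ => (hzero t).hasDerivWithinAt)
    (fun _ _ => trivial) ha

theorem IsIntegralCurveOn.ite_Icc {v : ℝ → E → E} {γ₁ γ₂ : ℝ → E} {c : ℝ}
    (h₁ : IsIntegralCurveOn γ₁ v (Icc a c)) (h₂ : IsIntegralCurveOn γ₂ v (Icc c b))
    (hc : γ₁ c = γ₂ c) (hac : a ≤ c) (hcb : c ≤ b) :
    IsIntegralCurveOn (fun t => if t ≤ c then γ₁ t else γ₂ t) v (Icc a b) := by
  set γ := fun t => if t ≤ c then γ₁ t else γ₂ t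
  have e₁ : EqOn γ γ₁ (Icc a c) := fun t ht => if_pos ht.2
  have e₂ : EqOn γ γ₂ (Icc c b) := fun t ht => by
    rcases ht.1.eq_or_lt with rfl | h
    · exact (if_pos le_rfl).trans hc
    · exact if_neg (not_le.2 h)
  have d₁ : IsIntegralCurveOn γ v (Icc a c) := fun t ht => by
    rw [e₁ ht]; exact (h₁ t ht).congr e₁ (e₁ ht)
  have d₂ : IsIntegralCurveOn γ v (Icc c b) := fun t ht => by
    rw [e₂ ht]; exact (h₂ t ht).congr e₂ (e₂ ht)
  intro t ht
  rcases lt_trichotomy t c with h | rfl | h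
  · exact (d₁ t ⟨ht.1, h.le⟩).mono_of_mem_nhdsWithin <| Filter.mem_of_superset
      (inter_mem_nhdsWithin _ (Iic_mem_nhds h)) fun z hz => ⟨hz.1.1, hz.2⟩
  · exact ((d₁ t ⟨hac, le_rfl⟩).union (d₂ t ⟨le_rfl, hcb⟩)).mono
      (Icc_union_Icc_eq_Icc hac hcb).symm.subset
  · exact (d₂ t ⟨h.le, ht.2⟩).mono_of_mem_nhdsWithin <| Filter.mem_of_superset
      (inter_mem_nhdsWithin _ (Ici_mem_nhds h)) fun z hz => ⟨hz.2, hz.1.2⟩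

variable [CompleteSpace E]

/-- Picard–Lindelöf on the ball of radius `‖x‖` around `x`, where the field is bounded by
`2 K ‖x‖`. -/
theorem exists_isIntegralCurveOn_Icc_of_mul_le_half {K : ℝ≥0} (hA : ContinuousOn A (Icc a b))
    (hK : ∀ t ∈ Icc a b, ‖A t‖₊ ≤ K) (hab : (b - a) * K ≤ 1 / 2) (t₀ : Icc a b) (x : E) :
    ∃ γ, γ t₀ = x ∧ IsIntegralCurveOn γ (fun t => A t) (Icc a b) := by
  have hpl : IsPicardLindelof (fun t => A t) t₀ x ‖x‖₊ 0 (2 * K * ‖x‖₊) K := by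
    refine ⟨fun t ht => ((A t).lipschitz.weaken (hK t ht)).lipschitzOnWith,
      fun y _ => hA.clm_apply continuousOn_const, fun t ht y hy => ?_, ?_⟩
    · have hy : ‖y‖ ≤ 2 * ‖x‖ := by
        have := norm_le_norm_add_norm_sub' y x
        rw [Metric.mem_closedBall, dist_eq_norm, coe_nnnorm] at hy
        linarith
      calc ‖A t y‖ ≤ K * ‖y‖ := (A t).le_of_opNorm_le (hK t ht) y
        _ ≤ 2 * K * ‖x‖ := by nlinarith [K.coe_nonneg]
        _ = _ := by push_cast; ring
    · have hmax : max (b - t₀) (t₀ - a) ≤ b - a :=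
        max_le (by linarith [t₀.2.1]) (by linarith [t₀.2.2])
      push_cast
      calc 2 * K * ‖x‖ * max (b - t₀) (t₀ - a) ≤ 2 * ‖x‖ * ((b - a) * K) := by
            nlinarith [mul_nonneg (mul_nonneg zero_le_two K.coe_nonneg) (norm_nonneg x)]
        _ ≤ 2 * ‖x‖ * (1 / 2) := by gcongr
        _ = ‖x‖ - 0 := by ring
  exact hpl.exists_eq_forall_mem_Icc_hasDerivWithinAt₀

/-- Peel off pieces of length `1 / (2K)` from the left, solve on each and glue. -/
theorem exists_isIntegralCurveOn_Icc_of_clm (hA : ContinuousOn A (Icc a b)) (hab : a ≤ b)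
    (x : E) :
    ∃ γ, γ b = x ∧ IsIntegralCurveOn γ (fun t => A t) (Icc a b) := by
  obtain ⟨K, hK⟩ := isCompact_Icc.exists_nnnorm_le_of_continuousOn hA
  obtain ⟨N, hN⟩ := exists_nat_ge ((b - a) * K * 2)
  induction N generalizing a with
  | zero =>
    exact exists_isIntegralCurveOn_Icc_of_mul_le_half hA hK (by norm_num at hN; linarith)
      ⟨b, hab, le_rfl⟩ x
  | succ N ih =>
    by_cases hsmall : (b - a) * K ≤ 1 / 2
    · exact exists_isIntegralCurveOn_Icc_of_mul_le_half hA hK hsmall ⟨b, hab, le_rfl⟩ x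
    have hKpos : (0 : ℝ) < K := by
      by_contra! h; nlinarith [K.coe_nonneg, sub_nonneg.2 hab]
    set c := a + (2 * (K : ℝ))⁻¹
    have hac : a ≤ c := le_add_of_nonneg_right (by positivity)
    have hcK : (c - a) * K = 1 / 2 := by simp only [c]; field_simp; ring
    have hcb : c ≤ b := by nlinarith
    obtain ⟨γ₂, hγ₂b, hγ₂⟩ := ih (hA.mono (Icc_subset_Icc_left hac)) hcb
      (fun t ht => hK t ⟨hac.trans ht.1, ht.2⟩) (by push_cast at hN; nlinarith)
    obtain ⟨γ₁, hγ₁c, hγ₁⟩ := exists_isIntegralCurveOn_Icc_of_mul_le_half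
      (hA.mono (Icc_subset_Icc_right hcb)) (fun t ht => hK t ⟨ht.1, ht.2.trans hcb⟩) hcK.le
      ⟨c, hac, le_rfl⟩ (γ₂ c)
    exact ⟨_, by simp [not_le.2 (show c < b by nlinarith), hγ₂b], hγ₁.ite_Icc hγ₂ hγ₁c hac hcb⟩

end LinearODE

section Lyapunov

variable {ι : Type*} [Fintype ι] {a b : ℝ} {B Q S : ℝ → Matrix ι ι ℝ}

theorem HasDerivWithinAt.matrix_transpose_s3 {κ : Type*} [Fintype κ] {M : ℝ → Matrix ι κ ℝ}
    {M' : Matrix ι κ ℝ} {s : Set ℝ} {t : ℝ} (h : HasDerivWithinAt M M' s t) :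
    HasDerivWithinAt (fun t => (M t)ᵀ) M'ᵀ s t :=
  (transposeLinearEquiv ι κ ℝ ℝ).toLinearMap.toContinuousLinearMap.hasFDerivAt.comp_hasDerivWithinAt
    t h

def lyapunovBilin : Matrix ι ι ℝ →ₗ[ℝ] Matrix ι ι ℝ →ₗ[ℝ] Matrix ι ι ℝ :=
  LinearMap.mk₂ ℝ (fun M F => -(Mᵀ * F) - F * M)
    (fun _ _ _ => by simp only [transpose_add, add_mul, mul_add]; abel)
    (fun _ _ _ => by
      simp only [transpose_smul, Matrix.smul_mul, Matrix.mul_smul, smul_sub, smul_neg])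
    (fun _ _ _ => by simp only [mul_add, add_mul]; abel)
    (fun _ _ _ => by simp only [Matrix.mul_smul, Matrix.smul_mul, smul_sub, smul_neg])

theorem isSymm_of_hasDerivWithinAt_lyapunov (hB : ContinuousOn B (Icc a b))
    (hQ : ∀ t ∈ Icc a b, (Q t).IsSymm)
    (hS : ∀ t ∈ Icc a b, HasDerivWithinAt S (-(B t)ᵀ * S t - S t * B t + Q t) (Icc a b) t)
    (ha : (S a).IsSymm) : ∀ t ∈ Icc a b, (S t).IsSymm := by
  have hF : IsIntegralCurveOn (fun t => S t - (S t)ᵀ)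
      (fun t => lyapunovBilin.toContinuousBilinearMap (B t)) (Icc a b) := fun t ht => by
    refine ((hS t ht).sub (hS t ht).matrix_transpose_s3).congr_deriv ?_
    simp only [LinearMap.toContinuousBilinearMap_apply, lyapunovBilin, LinearMap.mk₂_apply,
      transpose_add, transpose_sub, transpose_neg, transpose_mul, transpose_transpose,
      (hQ t ht).eq]
    noncomm_ring
  intro t ht
  have := hF.eqOn_zero_of_clm
    (lyapunovBilin.toContinuousBilinearMap.continuous.comp_continuousOn hB)
    (sub_eq_zero.2 ha.eq.symm) ht
  exact (sub_eq_zero.1 this).symm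

theorem hasDerivWithinAt_dotProduct_mulVec_lyapunov {y : ℝ → ι → ℝ} {s : Set ℝ} {t : ℝ}
    (hS : HasDerivWithinAt S (-(B t)ᵀ * S t - S t * B t + Q t) s t)
    (hy : HasDerivWithinAt y (B t *ᵥ y t) s t) :
    HasDerivWithinAt (fun t => y t ⬝ᵥ S t *ᵥ y t) (y t ⬝ᵥ Q t *ᵥ y t) s t := by
  have hSy := (mulVecBilin ℝ ℝ).toContinuousBilinearMap.hasDerivWithinAt_of_bilinear hS hy
  refine ((dotProductBilin ℝ ℝ).toContinuousBilinearMap.hasDerivWithinAt_of_bilinear hy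
    hSy).congr_deriv ?_
  simp only [LinearMap.toContinuousBilinearMap_apply, mulVecBilin_apply,
    dotProductBilin_apply_apply, add_mulVec, sub_mulVec, neg_mulVec, ← mulVec_mulVec,
    dotProduct_add, dotProduct_sub, dotProduct_neg, dotProduct_mulVec (y t) (B t)ᵀ, vecMul_transpose]
  ring

theorem monotoneOn_dotProduct_mulVec_lyapunov {y : ℝ → ι → ℝ}
    (hQ : ∀ t ∈ Icc a b, (Q t).PosSemidef)
    (hS : ∀ t ∈ Icc a b, HasDerivWithinAt S (-(B t)ᵀ * S t - S t * B t + Q t) (Icc a b) t)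
    (hy : ∀ t ∈ Icc a b, HasDerivWithinAt y (B t *ᵥ y t) (Icc a b) t) :
    MonotoneOn (fun t => y t ⬝ᵥ S t *ᵥ y t) (Icc a b) := by
  have hq t (ht : t ∈ Icc a b) := hasDerivWithinAt_dotProduct_mulVec_lyapunov (hS t ht) (hy t ht)
  refine monotoneOn_of_hasDerivWithinAt_nonneg (f' := fun t => y t ⬝ᵥ Q t *ᵥ y t)
    (convex_Icc a b) (fun t ht => (hq t ht).continuousWithinAt) (fun t ht => ?_) (fun t ht => ?_)
  · rw [interior_Icc] at ht ⊢
    exact (hq t (Ioo_subset_Icc_self ht)).mono Ioo_subset_Icc_self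
  · exact (hQ t (interior_subset ht)).dotProduct_mulVec_nonneg (y t)

theorem posDef_of_hasDerivWithinAt_lyapunov (hab : a ≤ b) (hB : ContinuousOn B (Icc a b))
    (hQ : ∀ t ∈ Icc a b, (Q t).PosSemidef)
    (hS : ∀ t ∈ Icc a b, HasDerivWithinAt S (-(B t)ᵀ * S t - S t * B t + Q t) (Icc a b) t)
    (ha : (S a).PosDef) : (S b).PosDef := by
  have hsymm := isSymm_of_hasDerivWithinAt_lyapunov hB
    (fun t ht => isHermitian_iff_isSymm.1 (hQ t ht).isHermitian) hS
    (isHermitian_iff_isSymm.1 ha.isHermitian) b (right_mem_Icc.2 hab)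
  refine PosDef.of_dotProduct_mulVec_pos (isHermitian_iff_isSymm.2 hsymm) fun x hx => ?_
  have hA := (mulVecBilin ℝ ℝ).toContinuousBilinearMap.continuous.comp_continuousOn hB
  obtain ⟨y, hyb, hy⟩ := exists_isIntegralCurveOn_Icc_of_clm hA hab x
  have hya : y a ≠ 0 := fun h => hx (hyb ▸ hy.eqOn_zero_of_clm hA h (right_mem_Icc.2 hab))
  calc 0 < y a ⬝ᵥ S a *ᵥ y a := ha.dotProduct_mulVec_pos hya
    _ ≤ y b ⬝ᵥ S b *ᵥ y b := monotoneOn_dotProduct_mulVec_lyapunov hQ hS hy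
        (left_mem_Icc.2 hab) (right_mem_Icc.2 hab) hab
    _ = star x ⬝ᵥ S b *ᵥ x := by rw [hyb, star_trivial]

end Lyapunov

theorem lyapunov_posDef_invariant_general
    {n : ℕ} (C : Matrix (Fin 1) (Fin n) ℝ) (θ t₀ : ℝ)
    (𝒜 : ℝ → Matrix (Fin n) (Fin n) ℝ) (h𝒜 : Continuous 𝒜)
    (S : ℝ → Matrix (Fin n) (Fin n) ℝ)
    (hS : ∀ t ∈ Set.Ici t₀, ∀ i j, HasDerivWithinAt (fun τ => S τ i j)
      ((-(𝒜 t)ᵀ * S t - S t * 𝒜 t - θ • S t + Cᵀ * C) i j) (Set.Ici t₀) t)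
    (h0 : (S t₀).PosDef) :
    ∀ t ∈ Set.Ici t₀, (S t).PosDef := by
  intro t₁ ht₁
  have hshift : ∀ t, -(𝒜 t)ᵀ * S t - S t * 𝒜 t - θ • S t =
      -(𝒜 t + (θ / 2) • 1)ᵀ * S t - S t * (𝒜 t + (θ / 2) • 1) := fun t => by
    simp only [transpose_add, transpose_smul, transpose_one, neg_add, add_mul, mul_add, neg_mul,
      Matrix.smul_mul, Matrix.mul_smul, one_mul, mul_one]
    module
  refine posDef_of_hasDerivWithinAt_lyapunov (B := fun t => 𝒜 t + (θ / 2) • 1)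
    (Q := fun _ => Cᵀ * C) ht₁ (by fun_prop)
    (fun _ _ => by simpa using posSemidef_conjTranspose_mul_self C) (fun t ht => ?_) h0
  rw [← hshift]
  exact (hasDerivWithinAt_pi.2 fun i => hasDerivWithinAt_pi.2 fun j => hS t ht.1 i j).mono
    Icc_subset_Ici_self

/-- Along the Lyapunov differential equation `S' = −𝒜ᵀS − S𝒜 − θS + CᵀC`,
if `S(t₀)` is symmetric positive definite then `S(t)` is symmetric positive definite
for every `t ≥ t₀`. -/
theorem lyapunov_posDef_invariant
    {n : ℕ} (hn : 1 ≤ n) (C : Matrix (Fin 1) (Fin n) ℝ) (θ t₀ : ℝ)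
    (𝒜 : ℝ → Matrix (Fin n) (Fin n) ℝ) (h𝒜 : Continuous 𝒜)
    (S : ℝ → Matrix (Fin n) (Fin n) ℝ)
    (hS : ∀ t ∈ Set.Ici t₀, ∀ i j, HasDerivWithinAt (fun τ => S τ i j)
      ((-(𝒜 t)ᵀ * S t - S t * 𝒜 t - θ • S t + Cᵀ * C) i j) (Set.Ici t₀) t)
    (h0 : (S t₀).PosDef) :
    ∀ t ∈ Set.Ici t₀, (S t).PosDef :=
  lyapunov_posDef_invariant_general C θ t₀ 𝒜 h𝒜 S hS h0
end

section
/- Let n ≥ 1, C ∈ ℝ^{1×n}, θ ∈ ℝ, let 𝒜 : ℝ → ℝ^{n×n} be continuous with ‖𝒜(s)‖ ≤ a for all s ∈ [t₀,t] (operator norm), and let S : [t₀,∞) → ℝ^{n×n} be differentiable with S'(τ) = −𝒜(τ)ᵀS(τ) − S(τ)𝒜(τ) − θS(τ) + CᵀC for all τ ≥ t₀. If S(t₀) is symmetric and S(t₀) ⪰ s_min·Id with s_min ≥ 0, then S(t) ⪰ e^{−(θ+2a)(t−t₀)} s_min·Id. -/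
/-!
Symmetry of `S` propagates: `Sᵀ - S` solves the homogeneous equation `E' = -𝒜ᵀE - E𝒜 - θE`,
whose right-hand side is bounded by `(2a + |θ|)‖E‖`, so Grönwall forces `E = 0`.

For the lower bound, compare `S` with a scalar barrier `μ`. At a first time `τ` where
`S - μ•1` stops being positive definite, a kernel vector `x` is an eigenvector of `S` with
eigenvalue `μ τ`, hence `xᵀS'x ≥ -(θμ + 2a|μ|)‖x‖²`. If `μ' < -(θμ + 2a|μ|)`, the function
`xᵀ(S - μ•1)x`, positive before `τ` and zero at `τ`, would be increasing at `τ`: impossible.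
Because `s_min ≥ 0`, the barrier `μ σ = e^{-(θ+2a)(σ-t₀)} s_min - ε e^{K(σ-t)}` with
`K = 2a + |θ| + 1` satisfies this strict inequality; let `ε → 0`.
-/

open Matrix Set Filter Topology

section ContinuousInduction

variable {α : Type*} [ConditionallyCompleteLinearOrder α] [TopologicalSpace α] [OrderTopology α]

theorem isClosed_setOf_Ico_subset (a : α) (s : Set α) : IsClosed {x | Ico a x ⊆ s} := by
  have : {x | Ico a x ⊆ s} = ⋂ y ∈ Ici a \ s, Iic y := by
    ext x
    simp only [mem_ofPred_eq, mem_iInter, mem_Iic, Set.mem_sdiff, mem_Ici, subset_def, mem_Ico]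
    exact ⟨fun h y hy => not_lt.1 fun hyx => hy.2 (h y ⟨hy.1, hyx⟩),
      fun h y hy => by_contra fun hys => (h y ⟨hy.1, hys⟩).not_gt hy.2⟩
  rw [this]
  exact isClosed_biInter fun y _ => isClosed_Iic

theorem Icc_subset_of_forall_mem_nhdsGT_of_Ico_subset [DenselyOrdered α] {a b : α} {s : Set α}
    (ha : a ∈ s) (hgt : ∀ x ∈ s ∩ Ico a b, s ∈ 𝓝[>] x) (hlim : ∀ x ∈ Ioc a b, Ico a x ⊆ s → x ∈ s) :
    Icc a b ⊆ s := by
  have hmem : ∀ x ∈ Icc a b, Ico a x ⊆ s → x ∈ s := fun x hx hsub =>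
    hx.1.eq_or_lt.elim (fun h => h ▸ ha) fun h => hlim x ⟨h, hx.2⟩ hsub
  have hIco : Icc a b ⊆ {x | Ico a x ⊆ s} := by
    refine ((isClosed_setOf_Ico_subset a s).inter isClosed_Icc).Icc_subset_of_forall_mem_nhdsWithin
      (by simp) ?_
    rintro x ⟨hx, hxab⟩
    have hxs : x ∈ s := hmem x (Ico_subset_Icc_self hxab) hx
    obtain ⟨u, hxu, hu⟩ := (mem_nhdsGT_iff_exists_Ioo_subset' hxab.2).1 (hgt x ⟨hxs, hxab⟩)
    filter_upwards [Ioo_mem_nhdsGT hxu] with y hy z hz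
    rcases lt_trichotomy z x with h | rfl | h
    · exact hx ⟨hz.1, h⟩
    · exact hxs
    · exact hu ⟨h, hz.2.trans hy.2⟩
  exact fun x hx => hmem x hx (hIco hx)

end ContinuousInduction

theorem HasDerivWithinAt.nonpos_of_isMinOn_Icc {g : ℝ → ℝ} {g' a c : ℝ}
    (hg : HasDerivWithinAt g g' (Icc a c) c) (hmin : IsMinOn g (Icc a c) c) (hac : a < c) :
    g' ≤ 0 := by
  have hcone : a - c ∈ posTangentConeAt (Icc a c) c :=
    sub_mem_posTangentConeAt_of_segment_subset (segment_eq_Icc' c a ▸ by simp [hac.le])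
  have := hmin.localize.hasFDerivWithinAt_nonneg hg.hasFDerivWithinAt hcone
  simp only [ContinuousLinearMap.toSpanSingleton_apply, smul_eq_mul] at this
  nlinarith

section MatrixCalculus

variable {m n : Type*} [Fintype n] {N : ℝ → Matrix m n ℝ} {N' : Matrix m n ℝ}
  {s : Set ℝ} {τ : ℝ}

theorem hasDerivWithinAt_matrix_s5 :
    HasDerivWithinAt N N' s τ ↔ ∀ i j, HasDerivWithinAt (fun σ => N σ i j) (N' i j) s τ :=
  hasDerivWithinAt_pi.trans (forall_congr' fun _ => hasDerivWithinAt_pi)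

theorem HasDerivWithinAt.matrix_transpose_s5 [Fintype m] (h : HasDerivWithinAt N N' s τ) :
    HasDerivWithinAt (fun σ => (N σ)ᵀ) N'ᵀ s τ :=
  hasDerivWithinAt_matrix_s5.2 fun i j => hasDerivWithinAt_matrix_s5.1 h j i

theorem HasDerivWithinAt.dotProduct_mulVec [Fintype m] (h : HasDerivWithinAt N N' s τ) (x : m → ℝ)
    (y : n → ℝ) : HasDerivWithinAt (fun σ => x ⬝ᵥ N σ *ᵥ y) (x ⬝ᵥ N' *ᵥ y) s τ := by
  simp only [dotProduct, mulVec, Finset.mul_sum]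
  exact HasDerivWithinAt.fun_sum fun i _ => HasDerivWithinAt.fun_sum fun j _ =>
    ((hasDerivWithinAt_matrix_s5.1 h i j).mul_const (y j)).const_mul (x i)

end MatrixCalculus

namespace Matrix

variable {ι : Type*} [Fintype ι] [DecidableEq ι]

open scoped Matrix.Norms.L2Operator in
theorem abs_dotProduct_mulVec_le (M : Matrix ι ι ℝ) (x : ι → ℝ) :
    |x ⬝ᵥ M *ᵥ x| ≤ ‖M‖ * (x ⬝ᵥ x) := by
  set v : EuclideanSpace ℝ ι := WithLp.toLp 2 x
  have hv : ‖v‖ ^ 2 = x ⬝ᵥ x := by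
    rw [EuclideanSpace.norm_sq_eq]; simp [v, dotProduct, sq]
  calc |x ⬝ᵥ M *ᵥ x| = |inner ℝ v (toEuclideanCLM (𝕜 := ℝ) M v)| := by
        rw [inner_toEuclideanCLM]
    _ ≤ ‖v‖ * (‖M‖ * ‖v‖) := (abs_real_inner_le_norm _ _).trans
        (by gcongr; exact (toEuclideanCLM (𝕜 := ℝ) M).le_opNorm v)
    _ = ‖M‖ * (x ⬝ᵥ x) := by rw [← hv]; ring

open scoped MatrixOrder in
theorem PosDef.exists_pos_posSemidef_sub_smul_one {M : Matrix ι ι ℝ} (hM : M.PosDef) :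
    ∃ r : ℝ, 0 < r ∧ (M - r • 1).PosSemidef := by
  rcases subsingleton_or_nontrivial (Matrix ι ι ℝ) with _ | _
  · exact ⟨1, one_pos, by rw [Subsingleton.elim (M - _) 0]; exact .zero⟩
  obtain ⟨r, hr, hle⟩ := (CFC.exists_pos_algebraMap_le_iff hM.isHermitian.isSelfAdjoint).2
    fun x hx => hM.isStrictlyPositive.spectrum_pos hx
  exact ⟨r, hr, by simpa [Matrix.le_iff, Algebra.algebraMap_eq_smul_one] using hle⟩

open scoped Matrix.Norms.L2Operator in
theorem PosDef.eventually_posDef {M : Matrix ι ι ℝ} (hM : M.PosDef) :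
    ∀ᶠ M' in 𝓝 M, M'.IsHermitian → M'.PosDef := by
  obtain ⟨r, hr, hMr⟩ := hM.exists_pos_posSemidef_sub_smul_one
  filter_upwards [Metric.ball_mem_nhds M hr] with M' hM' hherm
  refine posDef_iff_dotProduct_mulVec.2 ⟨hherm, fun x hx => ?_⟩
  have hlow := (posSemidef_iff_dotProduct_mulVec.1 hMr).2 x
  have hdiff := abs_dotProduct_mulVec_le (M' - M) x
  have hxx : 0 < x ⬝ᵥ x := by simpa using dotProduct_star_self_pos_iff.2 hx
  rw [Metric.mem_ball, dist_eq_norm] at hM'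
  simp only [star_trivial, sub_mulVec, dotProduct_sub, smul_mulVec, one_mulVec,
    dotProduct_smul, smul_eq_mul] at hlow hdiff ⊢
  nlinarith [abs_le.1 hdiff]

theorem PosSemidef.of_forall_posSemidef_add_smul_one {M : Matrix ι ι ℝ}
    (h : ∀ ε : ℝ, 0 < ε → (M + ε • 1).PosSemidef) : M.PosSemidef := by
  refine posSemidef_iff_dotProduct_mulVec.2 ⟨?_, fun x => ?_⟩
  · simpa using (h 1 one_pos).isHermitian.sub (isHermitian_one (α := ℝ))
  simp only [star_trivial]
  by_contra! hneg
  have hx : ∀ ε : ℝ, 0 < ε → 0 ≤ x ⬝ᵥ M *ᵥ x + ε * (x ⬝ᵥ x) := fun ε hε => by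
    simpa [add_mulVec, smul_mulVec, dotProduct_add] using
      (posSemidef_iff_dotProduct_mulVec.1 (h ε hε)).2 x
  have hxx : 0 < x ⬝ᵥ x := by nlinarith [hx 1 one_pos]
  have := hx (-(x ⬝ᵥ M *ᵥ x) / (2 * (x ⬝ᵥ x))) (div_pos (by linarith) (by linarith))
  field_simp at this
  linarith

theorem posDef_of_deriv_pos_at_boundary {N N' : ℝ → Matrix ι ι ℝ} {a b : ℝ}
    (hcont : ContinuousOn N (Icc a b))
    (hderiv : ∀ τ ∈ Ioc a b, HasDerivWithinAt N (N' τ) (Icc a τ) τ)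
    (hherm : ∀ τ ∈ Icc a b, (N τ).IsHermitian) (ha : (N a).PosDef)
    (hbdry : ∀ τ ∈ Ioc a b, (N τ).PosSemidef → ∀ x : ι → ℝ, x ≠ 0 →
      x ⬝ᵥ N τ *ᵥ x = 0 → 0 < x ⬝ᵥ N' τ *ᵥ x) :
    ∀ τ ∈ Icc a b, (N τ).PosDef := by
  refine fun τ hτ => Icc_subset_of_forall_mem_nhdsGT_of_Ico_subset
    (s := {τ | (N τ).PosDef}) ha ?_ ?_ hτ
  · rintro τ ⟨hpos, hτ⟩
    have hN : Tendsto N (𝓝[>] τ) (𝓝 (N τ)) :=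
      (hcont τ (Ico_subset_Icc_self hτ)).mono_of_mem_nhdsWithin (Icc_mem_nhdsGT_of_mem hτ)
    filter_upwards [hN.eventually hpos.eventually_posDef, Ioc_mem_nhdsGT hτ.2] with σ hσ hσb
    exact hσ (hherm σ ⟨hτ.1.trans hσb.1.le, hσb.2⟩)
  · intro τ hτ hpos
    have hquad : ∀ x : ι → ℝ, HasDerivWithinAt (fun σ => x ⬝ᵥ N σ *ᵥ x) (x ⬝ᵥ N' τ *ᵥ x)
        (Icc a τ) τ := fun x => (hderiv τ hτ).dotProduct_mulVec x x
    have hposσ : ∀ σ ∈ Ico a τ, ∀ x : ι → ℝ, x ≠ 0 → 0 < x ⬝ᵥ N σ *ᵥ x := fun σ hσ x hx => by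
      simpa using (posDef_iff_dotProduct_mulVec.1 (hpos hσ)).2 hx
    have hpsd : (N τ).PosSemidef := by
      refine posSemidef_iff_dotProduct_mulVec.2 ⟨hherm τ (Ioc_subset_Icc_self hτ), fun x => ?_⟩
      rcases eq_or_ne x 0 with rfl | hx
      · simp
      have := right_nhdsWithin_Ico_neBot hτ.1
      refine ge_of_tendsto (((hquad x).continuousWithinAt.mono Ico_subset_Icc_self).tendsto)
        (eventually_nhdsWithin_of_forall fun σ hσ => ?_)
      simpa using (hposσ σ hσ x hx).le
    refine posDef_iff_dotProduct_mulVec.2 ⟨hpsd.isHermitian, fun x hx => ?_⟩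
    by_contra! hle
    have hzero : x ⬝ᵥ N τ *ᵥ x = 0 :=
      le_antisymm (by simpa using hle)
        (by simpa using (posSemidef_iff_dotProduct_mulVec.1 hpsd).2 x)
    have hmin : IsMinOn (fun σ => x ⬝ᵥ N σ *ᵥ x) (Icc a τ) τ := fun σ hσ => by
      show x ⬝ᵥ N τ *ᵥ x ≤ x ⬝ᵥ N σ *ᵥ x
      rcases hσ.2.lt_or_eq with h | h
      · exact hzero ▸ (hposσ σ ⟨hσ.1, h⟩ x hx).le
      · rw [h]
    exact (hbdry τ hτ hpsd x hx hzero).not_ge ((hquad x).nonpos_of_isMinOn_Icc hmin hτ.1)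

end Matrix

section Lyapunov

variable {ι : Type*} [Fintype ι]

def lyapunovRHS (A : Matrix ι ι ℝ) (θ : ℝ) (Q S : Matrix ι ι ℝ) : Matrix ι ι ℝ :=
  -Aᵀ * S - S * A - θ • S + Q

theorem transpose_lyapunovRHS (A : Matrix ι ι ℝ) (θ : ℝ) (Q S : Matrix ι ι ℝ) :
    (lyapunovRHS A θ Q S)ᵀ = lyapunovRHS A θ Qᵀ Sᵀ := by
  simp only [lyapunovRHS, transpose_add, transpose_sub, transpose_mul, transpose_smul,
    transpose_neg, transpose_transpose, neg_mul]
  abel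

theorem lyapunovRHS_sub_lyapunovRHS (A : Matrix ι ι ℝ) (θ : ℝ) (Q S S' : Matrix ι ι ℝ) :
    lyapunovRHS A θ Q S - lyapunovRHS A θ Q S' = lyapunovRHS A θ 0 (S - S') := by
  simp only [lyapunovRHS, mul_sub, sub_mul, smul_sub, add_zero]
  abel

variable [DecidableEq ι]

open scoped Matrix.Norms.L2Operator

theorem norm_lyapunovRHS_zero_le (A : Matrix ι ι ℝ) (θ : ℝ) (E : Matrix ι ι ℝ) :
    ‖lyapunovRHS A θ 0 E‖ ≤ (2 * ‖A‖ + |θ|) * ‖E‖ := by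
  have hAt : ‖Aᵀ‖ = ‖A‖ := by
    rw [← conjTranspose_eq_transpose_of_trivial, l2_opNorm_conjTranspose]
  calc ‖lyapunovRHS A θ 0 E‖ ≤ ‖-Aᵀ * E‖ + ‖E * A‖ + ‖θ • E‖ := by
        rw [lyapunovRHS, add_zero]
        exact (norm_sub_le _ _).trans (add_le_add_left (norm_sub_le _ _) _)
    _ ≤ ‖A‖ * ‖E‖ + ‖E‖ * ‖A‖ + |θ| * ‖E‖ := by
        gcongr
        · rw [neg_mul, norm_neg, ← hAt]; exact l2_opNorm_mul _ _
        · exact l2_opNorm_mul _ _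
        · rw [norm_smul, Real.norm_eq_abs]
    _ = (2 * ‖A‖ + |θ|) * ‖E‖ := by ring

theorem dotProduct_lyapunovRHS_mulVec_ge {A Q S : Matrix ι ι ℝ} {θ a μ : ℝ} {x : ι → ℝ}
    (hA : ‖A‖ ≤ a) (hQ : Q.PosSemidef) (hS : Sᵀ = S) (hx : S *ᵥ x = μ • x) :
    -(θ * μ + 2 * a * |μ|) * (x ⬝ᵥ x) ≤ x ⬝ᵥ lyapunovRHS A θ Q S *ᵥ x := by
  have hQx : 0 ≤ x ⬝ᵥ Q *ᵥ x := by simpa using (posSemidef_iff_dotProduct_mulVec.1 hQ).2 x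
  have hxx : 0 ≤ x ⬝ᵥ x := by simpa using dotProduct_star_self_nonneg x
  have hμq : |μ * (x ⬝ᵥ A *ᵥ x)| ≤ |μ| * (a * (x ⬝ᵥ x)) := by
    rw [abs_mul]
    exact mul_le_mul_of_nonneg_left ((abs_dotProduct_mulVec_le A x).trans
      (mul_le_mul_of_nonneg_right hA hxx)) (abs_nonneg μ)
  have hSA : x ⬝ᵥ S *ᵥ (A *ᵥ x) = μ * (x ⬝ᵥ A *ᵥ x) := by
    rw [dotProduct_mulVec, ← mulVec_transpose, hS, hx, smul_dotProduct, smul_eq_mul]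
  have hAS : x ⬝ᵥ Aᵀ *ᵥ (S *ᵥ x) = μ * (x ⬝ᵥ A *ᵥ x) := by
    rw [hx, mulVec_smul, dotProduct_smul, smul_eq_mul, mulVec_transpose, dotProduct_comm,
      ← dotProduct_mulVec]
  have hSx : x ⬝ᵥ S *ᵥ x = μ * (x ⬝ᵥ x) := by rw [hx, dotProduct_smul, smul_eq_mul]
  have hexp : x ⬝ᵥ lyapunovRHS A θ Q S *ᵥ x =
      -2 * (μ * (x ⬝ᵥ A *ᵥ x)) - θ * μ * (x ⬝ᵥ x) + x ⬝ᵥ Q *ᵥ x := by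
    simp only [lyapunovRHS, add_mulVec, sub_mulVec, neg_mul, neg_mulVec, ← mulVec_mulVec,
      dotProduct_add, dotProduct_sub, dotProduct_neg, hSA, hAS, smul_mulVec, dotProduct_smul,
      smul_eq_mul, hSx]
    ring
  rw [hexp]
  nlinarith [abs_le.1 hμq]

variable {A Q S : ℝ → Matrix ι ι ℝ} {θ a t₀ t : ℝ}

theorem transpose_eq_of_hasDerivWithinAt_lyapunovRHS (hA : ∀ τ ∈ Icc t₀ t, ‖A τ‖ ≤ a)
    (hQ : ∀ τ ∈ Icc t₀ t, (Q τ)ᵀ = Q τ)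
    (hS : ∀ τ ∈ Ici t₀, HasDerivWithinAt S (lyapunovRHS (A τ) θ (Q τ) (S τ)) (Ici t₀) τ)
    (h₀ : (S t₀)ᵀ = S t₀) : ∀ τ ∈ Icc t₀ t, (S τ)ᵀ = S τ := by
  have hE : ∀ τ ∈ Ici t₀, HasDerivWithinAt (fun σ => (S σ)ᵀ - S σ)
      (lyapunovRHS (A τ) θ (Q τ)ᵀ (S τ)ᵀ - lyapunovRHS (A τ) θ (Q τ) (S τ)) (Ici t₀) τ :=
    fun τ hτ => by simpa only [transpose_lyapunovRHS] using
      (hS τ hτ).matrix_transpose_s5.fun_sub (hS τ hτ)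
  intro τ hτ
  have hgron := norm_le_gronwallBound_of_norm_deriv_right_le (δ := 0) (K := 2 * a + |θ|) (ε := 0)
    (fun σ hσ => (hE σ hσ.1).continuousWithinAt.mono Icc_subset_Ici_self)
    (fun σ hσ => (hE σ hσ.1).mono (Ici_subset_Ici.2 hσ.1)) (by simp [h₀])
    (fun σ hσ => by
      rw [hQ σ (Ico_subset_Icc_self hσ), lyapunovRHS_sub_lyapunovRHS, add_zero]
      exact (norm_lyapunovRHS_zero_le _ _ _).trans
        (by gcongr; exact hA σ (Ico_subset_Icc_self hσ)))
    τ hτ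
  rwa [gronwallBound_ε0_δ0, norm_le_zero_iff, sub_eq_zero] at hgron

theorem posDef_sub_smul_one_of_hasDerivWithinAt_lyapunovRHS {μ μ' : ℝ → ℝ}
    (hA : ∀ τ ∈ Icc t₀ t, ‖A τ‖ ≤ a) (hQ : ∀ τ ∈ Icc t₀ t, (Q τ).PosSemidef)
    (hS : ∀ τ ∈ Ici t₀, HasDerivWithinAt S (lyapunovRHS (A τ) θ (Q τ) (S τ)) (Ici t₀) τ)
    (hsymm : ∀ τ ∈ Icc t₀ t, (S τ)ᵀ = S τ) (hμ : ∀ τ, HasDerivAt μ (μ' τ) τ)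
    (hrate : ∀ τ ∈ Ioc t₀ t, θ * μ τ + 2 * a * |μ τ| + μ' τ < 0)
    (h₀ : (S t₀ - μ t₀ • 1).PosDef) : ∀ τ ∈ Icc t₀ t, (S τ - μ τ • 1).PosDef := by
  have hN : ∀ τ ∈ Ici t₀, HasDerivWithinAt (fun σ => S σ - μ σ • 1)
      (lyapunovRHS (A τ) θ (Q τ) (S τ) - μ' τ • 1) (Ici t₀) τ :=
    fun τ hτ => (hS τ hτ).sub ((hμ τ).hasDerivWithinAt.smul_const 1)
  refine posDef_of_deriv_pos_at_boundary
    (fun τ hτ => (hN τ hτ.1).continuousWithinAt.mono Icc_subset_Ici_self)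
    (fun τ hτ => (hN τ (Ioc_subset_Icc_self hτ).1).mono Icc_subset_Ici_self)
    (fun τ hτ => by simp [IsHermitian, conjTranspose_eq_transpose_of_trivial, hsymm τ hτ]) h₀ ?_
  intro τ hτ hpsd x hx hzero
  have hτ' := Ioc_subset_Icc_self hτ
  have heig : S τ *ᵥ x = μ τ • x := by
    have := (hpsd.dotProduct_mulVec_zero_iff x).1 (by simpa using hzero)
    rwa [sub_mulVec, smul_mulVec, one_mulVec, sub_eq_zero] at this
  have hge := dotProduct_lyapunovRHS_mulVec_ge (θ := θ) (hA τ hτ') (hQ τ hτ') (hsymm τ hτ') heig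
  have hxx : 0 < x ⬝ᵥ x := by simpa using dotProduct_star_self_pos_iff.2 hx
  rw [sub_mulVec, dotProduct_sub, smul_mulVec, one_mulVec, dotProduct_smul, smul_eq_mul]
  nlinarith [mul_pos (neg_pos.2 (hrate τ hτ)) hxx]

theorem posSemidef_sub_smul_one_of_hasDerivWithinAt_lyapunovRHS {s : ℝ} (ht : t₀ ≤ t)
    (hA : ∀ τ ∈ Icc t₀ t, ‖A τ‖ ≤ a) (hQ : ∀ τ ∈ Icc t₀ t, (Q τ).PosSemidef)
    (hS : ∀ τ ∈ Ici t₀, HasDerivWithinAt S (lyapunovRHS (A τ) θ (Q τ) (S τ)) (Ici t₀) τ)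
    (hsymm : ∀ τ ∈ Icc t₀ t, (S τ)ᵀ = S τ) (hs : 0 ≤ s) (h₀ : (S t₀ - s • 1).PosSemidef) :
    (S t - (Real.exp (-(θ + 2 * a) * (t - t₀)) * s) • 1).PosSemidef := by
  have ha : 0 ≤ a := (norm_nonneg _).trans (hA t₀ ⟨le_rfl, ht⟩)
  refine PosSemidef.of_forall_posSemidef_add_smul_one fun ε hε => ?_
  set K := 2 * a + |θ| + 1
  set φ : ℝ → ℝ := fun σ => Real.exp (-(θ + 2 * a) * (σ - t₀)) * s
  set e : ℝ → ℝ := fun σ => Real.exp (K * (σ - t))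
  have hμ : ∀ σ, HasDerivAt (fun σ => φ σ - ε * e σ)
      (-(θ + 2 * a) * φ σ - ε * (K * e σ)) σ := fun σ => by
    have h1 := (((hasDerivAt_id σ).sub_const t₀).const_mul (-(θ + 2 * a))).exp.mul_const s
    have h2 := (((hasDerivAt_id σ).sub_const t).const_mul K).exp.const_mul ε
    exact (h1.fun_sub h2).congr_deriv (by simp only [φ, e, id]; ring)
  have hrate : ∀ σ ∈ Ioc t₀ t, θ * (φ σ - ε * e σ) + 2 * a * |φ σ - ε * e σ|
      + (-(θ + 2 * a) * φ σ - ε * (K * e σ)) < 0 := fun σ _ => by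
    have hφ : 0 ≤ φ σ := by positivity
    have he : 0 < e σ := Real.exp_pos _
    have habs : |φ σ - ε * e σ| ≤ φ σ + ε * e σ := (abs_sub _ _).trans_eq (by
      rw [abs_of_nonneg hφ, abs_of_pos (by positivity)])
    nlinarith [mul_le_mul_of_nonneg_left habs ha, neg_abs_le θ, mul_pos hε he]
  have h₀' : (S t₀ - (φ t₀ - ε * e t₀) • 1).PosDef := by
    have : S t₀ - (φ t₀ - ε * e t₀) • 1 = (S t₀ - s • 1) + (ε * e t₀) • (1 : Matrix ι ι ℝ) := by
      simp only [φ, sub_self, mul_zero, Real.exp_zero, one_mul, sub_smul]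
      abel
    rw [this]
    exact PosDef.posSemidef_add h₀ (PosDef.one.smul (by positivity))
  convert (posDef_sub_smul_one_of_hasDerivWithinAt_lyapunovRHS hA hQ hS hsymm hμ hrate h₀'
    t ⟨ht, le_rfl⟩).posSemidef using 1
  simp only [e, sub_self, mul_zero, Real.exp_zero, mul_one, sub_smul]
  abel

end Lyapunov

theorem lyapunov_worst_case_lower_bound_general
    {n : ℕ} (C : Matrix (Fin 1) (Fin n) ℝ) (θ a : ℝ)
    (𝒜 : ℝ → Matrix (Fin n) (Fin n) ℝ)
    (t₀ t : ℝ) (ht : t₀ ≤ t)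
    (ha : ∀ s ∈ Set.Icc t₀ t, ‖Matrix.toEuclideanCLM (𝕜 := ℝ) (𝒜 s)‖ ≤ a)
    (S : ℝ → Matrix (Fin n) (Fin n) ℝ)
    (hS : ∀ τ ∈ Set.Ici t₀, ∀ i j, HasDerivWithinAt (fun σ => S σ i j)
      ((-(𝒜 τ)ᵀ * S τ - S τ * 𝒜 τ - θ • S τ + Cᵀ * C) i j) (Set.Ici t₀) τ)
    (s_min : ℝ) (hs_min : 0 ≤ s_min)
    (hsym : (S t₀)ᵀ = S t₀)
    (hlow : (S t₀ - s_min • (1 : Matrix (Fin n) (Fin n) ℝ)).PosSemidef) :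
    (S t - (Real.exp (-(θ + 2 * a) * (t - t₀)) * s_min) •
      (1 : Matrix (Fin n) (Fin n) ℝ)).PosSemidef := by
  have hS' : ∀ τ ∈ Ici t₀, HasDerivWithinAt S (lyapunovRHS (𝒜 τ) θ (Cᵀ * C) (S τ)) (Ici t₀) τ :=
    fun τ hτ => hasDerivWithinAt_matrix_s5.2 (hS τ hτ)
  have hQ : (Cᵀ * C).PosSemidef := by
    simpa [conjTranspose_eq_transpose_of_trivial] using posSemidef_conjTranspose_mul_self C
  have hsymm := transpose_eq_of_hasDerivWithinAt_lyapunovRHS ha (fun _ _ => by simp) hS' hsym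
  exact posSemidef_sub_smul_one_of_hasDerivWithinAt_lyapunovRHS ht ha (fun _ _ => hQ) hS' hsymm
    hs_min hlow

/-- Worst-case lower bound for the Lyapunov differential equation: if
`‖𝒜(s)‖ ≤ a` (operator norm) on `[t₀,t]`, `S(t₀)` is symmetric and `S(t₀) ⪰ s_min·Id`
with `s_min ≥ 0`, then `S(t) ⪰ e^{−(θ+2a)(t−t₀)} s_min·Id`. -/
theorem lyapunov_worst_case_lower_bound
    {n : ℕ} (hn : 1 ≤ n) (C : Matrix (Fin 1) (Fin n) ℝ) (θ a : ℝ)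
    (𝒜 : ℝ → Matrix (Fin n) (Fin n) ℝ) (h𝒜 : Continuous 𝒜)
    (t₀ t : ℝ) (ht : t₀ ≤ t)
    (ha : ∀ s ∈ Set.Icc t₀ t, ‖Matrix.toEuclideanCLM (𝕜 := ℝ) (𝒜 s)‖ ≤ a)
    (S : ℝ → Matrix (Fin n) (Fin n) ℝ)
    (hS : ∀ τ ∈ Set.Ici t₀, ∀ i j, HasDerivWithinAt (fun σ => S σ i j)
      ((-(𝒜 τ)ᵀ * S τ - S τ * 𝒜 τ - θ • S τ + Cᵀ * C) i j) (Set.Ici t₀) τ)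
    (s_min : ℝ) (hs_min : 0 ≤ s_min)
    (hsym : (S t₀)ᵀ = S t₀)
    (hlow : (S t₀ - s_min • (1 : Matrix (Fin n) (Fin n) ℝ)).PosSemidef) :
    (S t - (Real.exp (-(θ + 2 * a) * (t - t₀)) * s_min) •
      (1 : Matrix (Fin n) (Fin n) ℝ)).PosSemidef :=
  lyapunov_worst_case_lower_bound_general C θ a 𝒜 t₀ t ht ha S hS s_min hs_min hsym hlow
end

section
/- Let n ≥ 1, C ∈ ℝ^{1×n}, θ ∈ ℝ, let 𝒜 : ℝ → ℝ^{n×n} be continuous, and on [t₀,t₁] let S : [t₀,t₁] → ℝ^{n×n} be differentiable with S(t) symmetric positive definite for every t and S'(t) = −𝒜(t)ᵀS(t) − S(t)𝒜(t) − θS(t) + CᵀC, and let ε : [t₀,t₁] → ℝⁿ be differentiable with ε'(t) = 𝒜(t)ε(t) − S(t)⁻¹CᵀCε(t). Then d/dt (ε(t)ᵀS(t)ε(t)) = −θ ε(t)ᵀS(t)ε(t) − |Cε(t)|² for all t ∈ [t₀,t₁], and consequently ε(t)ᵀS(t)ε(t) ≤ e^{−θ(t−t₀)} ε(t₀)ᵀS(t₀)ε(t₀)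 for all t ∈ [t₀,t₁]. -/
/-!
Along the two equations the time derivative of `V = εᵀSε` collapses to `-θV - |Cε|²`: the terms
`±𝒜` cancel by symmetry of `S`, and `S · S⁻¹CᵀCε = CᵀCε` turns the correction term of `ε'`
into `-2|Cε|²`, of which the `+CᵀC` of `S'` gives back one copy. Hence `V' ≤ -θV`, and
Grönwall's inequality yields the exponential decay.
-/

open Matrix Set

section Derivatives

variable {ι : Type*} [Fintype ι] {s : Set ℝ} {t : ℝ}

theorem HasDerivWithinAt.dotProduct {x y : ℝ → ι → ℝ} {x' y' : ι → ℝ}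
    (hx : HasDerivWithinAt x x' s t) (hy : HasDerivWithinAt y y' s t) :
    HasDerivWithinAt (fun τ => x τ ⬝ᵥ y τ) (x' ⬝ᵥ y t + x t ⬝ᵥ y') s t := by
  have hsum := HasDerivWithinAt.fun_sum (u := Finset.univ) fun i _ =>
    (hasDerivWithinAt_pi.mp hx i).fun_mul (hasDerivWithinAt_pi.mp hy i)
  rwa [Finset.sum_add_distrib] at hsum

theorem HasDerivWithinAt.mulVec {M : ℝ → Matrix ι ι ℝ} {M' : Matrix ι ι ℝ}
    {x : ℝ → ι → ℝ} {x' : ι → ℝ}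
    (hM : ∀ i j, HasDerivWithinAt (fun τ => M τ i j) (M' i j) s t)
    (hx : HasDerivWithinAt x x' s t) :
    HasDerivWithinAt (fun τ => M τ *ᵥ x τ) (M' *ᵥ x t + M t *ᵥ x') s t := by
  refine hasDerivWithinAt_pi.mpr fun i => ?_
  simpa only [Pi.add_apply, Matrix.mulVec, ← add_dotProduct] using
    (hasDerivWithinAt_pi.mpr (hM i)).dotProduct hx

end Derivatives

theorem le_mul_exp_of_hasDerivWithinAt_le_mul {f f' : ℝ → ℝ} {K a b : ℝ}
    (hf : ∀ t ∈ Icc a b, HasDerivWithinAt f (f' t) (Icc a b) t)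
    (bound : ∀ t ∈ Ico a b, f' t ≤ K * f t) :
    ∀ t ∈ Icc a b, f t ≤ f a * Real.exp (K * (t - a)) := by
  have hright : ∀ t ∈ Ico a b, HasDerivWithinAt f (f' t) (Ici t) t := fun t ht =>
    (hf t (Ico_subset_Icc_self ht)).mono_of_mem_nhdsWithin (Icc_mem_nhdsGE_of_mem ht)
  intro t ht
  simpa only [gronwallBound_ε0] using le_gronwallBound_of_liminf_deriv_right_le (K := K) (ε := 0)
    (fun t ht => (hf t ht).continuousWithinAt)
    (fun t ht _ hr => (hright t ht).liminf_right_slope_le hr) le_rfl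
    (fun t ht => by simpa only [add_zero] using bound t ht) t ht

theorem observer_lyapunov_deriv_eq {ι m : Type*} [Fintype ι] [DecidableEq ι] [Fintype m]
    (C : Matrix m ι ℝ) (θ : ℝ) (A M : Matrix ι ι ℝ) (hM : Mᵀ = M) (hdet : IsUnit M.det)
    (x : ι → ℝ) :
    let x' := A *ᵥ x - M⁻¹ *ᵥ ((Cᵀ * C) *ᵥ x)
    x' ⬝ᵥ (M *ᵥ x) + x ⬝ᵥ ((-Aᵀ * M - M * A - θ • M + Cᵀ * C) *ᵥ x + M *ᵥ x')
      = -θ * (x ⬝ᵥ (M *ᵥ x)) - (C *ᵥ x) ⬝ᵥ (C *ᵥ x) := by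
  intro x'
  have hswap : ∀ u v : ι → ℝ, u ⬝ᵥ (M *ᵥ v) = v ⬝ᵥ (M *ᵥ u) := fun u v => by
    rw [dotProduct_mulVec, ← mulVec_transpose, hM, dotProduct_comm]
  have hcancel : ∀ v, M *ᵥ (M⁻¹ *ᵥ v) = v := fun v => by
    rw [mulVec_mulVec, mul_nonsing_inv M hdet, one_mulVec]
  have hCC : x ⬝ᵥ (Cᵀ *ᵥ (C *ᵥ x)) = (C *ᵥ x) ⬝ᵥ (C *ᵥ x) := by
    rw [dotProduct_mulVec, vecMul_transpose]
  have hA : x ⬝ᵥ (Aᵀ *ᵥ (M *ᵥ x)) = x ⬝ᵥ (M *ᵥ (A *ᵥ x)) := by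
    rw [dotProduct_mulVec, vecMul_transpose, hswap]
  rw [hswap x', ← dotProduct_add]
  simp only [x', mulVec_sub, add_mulVec, sub_mulVec, neg_mul, neg_mulVec, smul_mulVec,
    ← mulVec_mulVec, hcancel, dotProduct_add, dotProduct_sub, dotProduct_neg, dotProduct_smul,
    smul_eq_mul, hA, hCC]
  ring

theorem observer_error_lyapunov_decay_general
    {n : ℕ} (C : Matrix (Fin 1) (Fin n) ℝ) (θ t₀ t₁ : ℝ)
    (𝒜 : ℝ → Matrix (Fin n) (Fin n) ℝ)
    (S : ℝ → Matrix (Fin n) (Fin n) ℝ)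
    (hSpos : ∀ t ∈ Set.Icc t₀ t₁, (S t).PosDef)
    (hS : ∀ t ∈ Set.Icc t₀ t₁, ∀ i j, HasDerivWithinAt (fun τ => S τ i j)
      ((-(𝒜 t)ᵀ * S t - S t * 𝒜 t - θ • S t + Cᵀ * C) i j) (Set.Icc t₀ t₁) t)
    (ε : ℝ → Fin n → ℝ)
    (hε : ∀ t ∈ Set.Icc t₀ t₁, HasDerivWithinAt ε
      (𝒜 t *ᵥ ε t - (S t)⁻¹ *ᵥ ((Cᵀ * C) *ᵥ ε t)) (Set.Icc t₀ t₁) t) :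
    (∀ t ∈ Set.Icc t₀ t₁,
      HasDerivWithinAt (fun τ => ε τ ⬝ᵥ (S τ *ᵥ ε τ))
        (-θ * (ε t ⬝ᵥ (S t *ᵥ ε t)) - ((C *ᵥ ε t) 0) ^ 2) (Set.Icc t₀ t₁) t)
    ∧ ∀ t ∈ Set.Icc t₀ t₁,
        ε t ⬝ᵥ (S t *ᵥ ε t) ≤ Real.exp (-θ * (t - t₀)) * (ε t₀ ⬝ᵥ (S t₀ *ᵥ ε t₀)) := by
  have hderiv : ∀ t ∈ Icc t₀ t₁, HasDerivWithinAt (fun τ => ε τ ⬝ᵥ (S τ *ᵥ ε τ))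
      (-θ * (ε t ⬝ᵥ (S t *ᵥ ε t)) - ((C *ᵥ ε t) 0) ^ 2) (Icc t₀ t₁) t := by
    intro t ht
    convert (hε t ht).dotProduct (.mulVec (hS t ht) (hε t ht)) using 1
    have hpos := hSpos t ht
    rw [observer_lyapunov_deriv_eq C θ (𝒜 t) (S t) hpos.isHermitian.eq
      (isUnit_iff_ne_zero.mpr hpos.det_pos.ne')]
    simp [dotProduct, sq]
  refine ⟨hderiv, fun t ht => ?_⟩
  rw [mul_comm]
  refine le_mul_exp_of_hasDerivWithinAt_le_mul hderiv (fun τ _ => ?_) t ht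
  linarith [sq_nonneg ((C *ᵥ ε τ) 0)]

/-- For the observer error `ε' = 𝒜ε − S⁻¹CᵀCε` along the Lyapunov differential
equation `S' = −𝒜ᵀS − S𝒜 − θS + CᵀC` with `S(t)` symmetric positive definite, one has
`d/dt (εᵀSε) = −θ εᵀSε − |Cε|²`, and consequently
`ε(t)ᵀS(t)ε(t) ≤ e^{−θ(t−t₀)} ε(t₀)ᵀS(t₀)ε(t₀)` on `[t₀,t₁]`. -/
theorem observer_error_lyapunov_decay
    {n : ℕ} (hn : 1 ≤ n) (C : Matrix (Fin 1) (Fin n) ℝ) (θ t₀ t₁ : ℝ) (ht : t₀ ≤ t₁)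
    (𝒜 : ℝ → Matrix (Fin n) (Fin n) ℝ) (h𝒜 : Continuous 𝒜)
    (S : ℝ → Matrix (Fin n) (Fin n) ℝ)
    (hSpos : ∀ t ∈ Set.Icc t₀ t₁, (S t).PosDef)
    (hS : ∀ t ∈ Set.Icc t₀ t₁, ∀ i j, HasDerivWithinAt (fun τ => S τ i j)
      ((-(𝒜 t)ᵀ * S t - S t * 𝒜 t - θ • S t + Cᵀ * C) i j) (Set.Icc t₀ t₁) t)
    (ε : ℝ → Fin n → ℝ)
    (hε : ∀ t ∈ Set.Icc t₀ t₁, HasDerivWithinAt ε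
      (𝒜 t *ᵥ ε t - (S t)⁻¹ *ᵥ ((Cᵀ * C) *ᵥ ε t)) (Set.Icc t₀ t₁) t) :
    (∀ t ∈ Set.Icc t₀ t₁,
      HasDerivWithinAt (fun τ => ε τ ⬝ᵥ (S τ *ᵥ ε τ))
        (-θ * (ε t ⬝ᵥ (S t *ᵥ ε t)) - ((C *ᵥ ε t) 0) ^ 2) (Set.Icc t₀ t₁) t)
    ∧ ∀ t ∈ Set.Icc t₀ t₁,
        ε t ⬝ᵥ (S t *ᵥ ε t) ≤ Real.exp (-θ * (t - t₀)) * (ε t₀ ⬝ᵥ (S t₀ *ᵥ ε t₀)) :=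
  observer_error_lyapunov_decay_general C θ t₀ t₁ 𝒜 S hSpos hS ε hε
end

section
/- Let n ≥ 1, C ∈ ℝ^{1×n}, θ ∈ ℝ, let 𝒜 : ℝ → ℝ^{n×n} be continuous, and on [t₀,t₁] let S : [t₀,t₁] → ℝ^{n×n} be differentiable with S(t) symmetric positive definite for every t and S'(t) = −𝒜(t)ᵀS(t) − S(t)𝒜(t) − θS(t) + CᵀC, and let ε : [t₀,t₁] → ℝⁿ be differentiable with ε'(t) = 𝒜(t)ε(t) − S(t)⁻¹CᵀCε(t). If s₁, s₂ > 0 are such that S(t) ⪰ s₁·Id for a given t ∈ [t₀,t₁] and S(t₀) ⪯ s₂·Id, then |ε(t)| ≤ e^{−(θ/2)(t−t₀)} √(s₂/s₁) |ε(t₀)|. -/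
/-! The Lyapunov function `V τ = ε(τ)ᵀ S(τ) ε(τ)` satisfies `V' = -θ V - |C ε|² ≤ -θ V`: the
observer gain `S⁻¹CᵀC` is exactly what makes the `𝒜`-terms of the Lyapunov equation cancel.
Grönwall then gives `V t ≤ e^{-θ(t-t₀)} V t₀`, and the bounds `s₁ Id ⪯ S t`, `S t₀ ⪯ s₂ Id`
turn this into `s₁ |ε t|² ≤ e^{-θ(t-t₀)} s₂ |ε t₀|²`. -/

open Matrix Set

section
variable {ι : Type*} [Fintype ι]

theorem hasDerivWithinAt_dotProduct_mulVec {s : Set ℝ} {τ : ℝ}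
    {M : ℝ → Matrix ι ι ℝ} {M' : Matrix ι ι ℝ} {x : ℝ → ι → ℝ} {x' : ι → ℝ}
    (hM : ∀ i j, HasDerivWithinAt (fun σ => M σ i j) (M' i j) s τ)
    (hx : ∀ i, HasDerivWithinAt (fun σ => x σ i) (x' i) s τ) :
    HasDerivWithinAt (fun σ => x σ ⬝ᵥ M σ *ᵥ x σ)
      (x' ⬝ᵥ M τ *ᵥ x τ + x τ ⬝ᵥ M' *ᵥ x τ + x τ ⬝ᵥ M τ *ᵥ x') s τ := by
  have h : HasDerivWithinAt (fun σ => ∑ i, ∑ j, x σ i * (M σ i j * x σ j))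
      (∑ i, ∑ j, (x' i * (M τ i j * x τ j) + x τ i * (M' i j * x τ j + M τ i j * x' j))) s τ :=
    .fun_sum fun i _ => .fun_sum fun j _ => (hx i).mul ((hM i j).mul (hx j))
  convert h using 1
  · simp only [dotProduct, mulVec, Finset.mul_sum]
  · simp only [dotProduct, mulVec, Finset.mul_sum, mul_add, Finset.sum_add_distrib, add_assoc]

theorem EuclideanSpace.norm_sq_eq_dotProduct (x : EuclideanSpace ℝ ι) : ‖x‖ ^ 2 = x ⬝ᵥ x := by
  rw [EuclideanSpace.real_norm_sq_eq]
  simp only [dotProduct, sq]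

variable [DecidableEq ι]

theorem Matrix.PosSemidef.mul_norm_sq_le_dotProduct_mulVec {M : Matrix ι ι ℝ} {c : ℝ}
    (h : (M - c • 1).PosSemidef) (x : EuclideanSpace ℝ ι) : c * ‖x‖ ^ 2 ≤ x ⬝ᵥ M *ᵥ x := by
  have := h.dotProduct_mulVec_nonneg x
  simp only [star_trivial, sub_mulVec, dotProduct_sub, smul_mulVec, one_mulVec,
    dotProduct_smul, smul_eq_mul] at this
  rw [EuclideanSpace.norm_sq_eq_dotProduct]
  linarith

theorem Matrix.PosSemidef.dotProduct_mulVec_le_mul_norm_sq {M : Matrix ι ι ℝ} {c : ℝ}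
    (h : (c • 1 - M).PosSemidef) (x : EuclideanSpace ℝ ι) : x ⬝ᵥ M *ᵥ x ≤ c * ‖x‖ ^ 2 := by
  have := h.dotProduct_mulVec_nonneg x
  simp only [star_trivial, sub_mulVec, dotProduct_sub, smul_mulVec, one_mulVec,
    dotProduct_smul, smul_eq_mul] at this
  rw [EuclideanSpace.norm_sq_eq_dotProduct]
  linarith

end

section
variable {ι m : Type*} [Fintype ι] [DecidableEq ι] [Fintype m]

theorem observer_lyapunov_identity (θ : ℝ) (C : Matrix m ι ℝ) (A S : Matrix ι ι ℝ)
    (hsymm : S.IsSymm) (hdet : IsUnit S.det) (x : ι → ℝ) :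
    (A *ᵥ x - S⁻¹ *ᵥ ((Cᵀ * C) *ᵥ x)) ⬝ᵥ S *ᵥ x
      + x ⬝ᵥ (-Aᵀ * S - S * A - θ • S + Cᵀ * C) *ᵥ x
      + x ⬝ᵥ S *ᵥ (A *ᵥ x - S⁻¹ *ᵥ ((Cᵀ * C) *ᵥ x))
    = -θ * (x ⬝ᵥ S *ᵥ x) - (C *ᵥ x) ⬝ᵥ (C *ᵥ x) := by
  have hquad (u : ι → ℝ) : u ⬝ᵥ S *ᵥ x = x ⬝ᵥ S *ᵥ u := by
    rw [dotProduct_mulVec, ← mulVec_transpose, hsymm.eq, dotProduct_comm]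
  have hAS : x ⬝ᵥ (Aᵀ * S) *ᵥ x = x ⬝ᵥ S *ᵥ A *ᵥ x := by
    rw [← mulVec_mulVec, dotProduct_mulVec, vecMul_transpose, hquad]
  have hCC : x ⬝ᵥ (Cᵀ * C) *ᵥ x = (C *ᵥ x) ⬝ᵥ (C *ᵥ x) := by
    rw [← mulVec_mulVec, dotProduct_mulVec, vecMul_transpose]
  have hSSinv (v : ι → ℝ) : S *ᵥ S⁻¹ *ᵥ v = v := by
    rw [mulVec_mulVec, mul_nonsing_inv S hdet, one_mulVec]
  rw [hquad]
  simp only [mulVec_sub, dotProduct_sub, add_mulVec, sub_mulVec, neg_mulVec, dotProduct_add,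
    dotProduct_neg, smul_mulVec, dotProduct_smul, Matrix.neg_mul, hAS, hSSinv, hCC, smul_eq_mul]
  rw [← mulVec_mulVec]
  ring

theorem hasDerivWithinAt_observer_lyapunov (θ : ℝ) (C : Matrix m ι ℝ) {A : Matrix ι ι ℝ}
    {S : ℝ → Matrix ι ι ℝ} {x : ℝ → EuclideanSpace ℝ ι} {s : Set ℝ} {τ : ℝ}
    (hpos : (S τ).PosDef)
    (hS : ∀ i j, HasDerivWithinAt (fun σ => S σ i j)
      ((-Aᵀ * S τ - S τ * A - θ • S τ + Cᵀ * C) i j) s τ)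
    (hx : HasDerivWithinAt x (WithLp.toLp 2 (A *ᵥ x τ - (S τ)⁻¹ *ᵥ ((Cᵀ * C) *ᵥ x τ))) s τ) :
    HasDerivWithinAt (fun σ => x σ ⬝ᵥ S σ *ᵥ x σ)
      (-θ * (x τ ⬝ᵥ S τ *ᵥ x τ) - (C *ᵥ x τ) ⬝ᵥ (C *ᵥ x τ)) s τ := by
  have hxi (i : ι) : HasDerivWithinAt (fun σ => x σ i)
      ((A *ᵥ x τ - (S τ)⁻¹ *ᵥ ((Cᵀ * C) *ᵥ x τ)) i) s τ :=
    (EuclideanSpace.proj (𝕜 := ℝ) i).hasFDerivAt.comp_hasDerivWithinAt τ hx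
  have hsymm : (S τ).IsSymm := isHermitian_iff_isSymm.mp hpos.1
  rw [← observer_lyapunov_identity θ C A (S τ) hsymm
    ((isUnit_iff_isUnit_det _).mp hpos.isUnit)]
  exact hasDerivWithinAt_dotProduct_mulVec hS hxi

end

theorem le_exp_mul_of_hasDerivWithinAt_le_neg_mul {f f' : ℝ → ℝ} {θ a b : ℝ}
    (hf : ∀ x ∈ Icc a b, HasDerivWithinAt f (f' x) (Icc a b) x)
    (bound : ∀ x ∈ Icc a b, f' x ≤ -θ * f x) {x : ℝ} (hx : x ∈ Icc a b) :
    f x ≤ Real.exp (-θ * (x - a)) * f a := by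
  have := le_gronwallBound_of_liminf_deriv_right_le (fun y hy => (hf y hy).continuousWithinAt)
    (fun y hy _ hr => ((hf y (Ico_subset_Icc_self hy)).mono_of_mem_nhdsWithin
      (Filter.mem_of_superset (Icc_mem_nhdsGE hy.2) (Icc_subset_Icc_left hy.1))
      ).liminf_right_slope_le hr)
    le_rfl (fun y hy => (bound y (Ico_subset_Icc_self hy)).trans_eq (add_zero _).symm) x hx
  rwa [gronwallBound_ε0, mul_comm] at this

theorem le_exp_mul_sqrt_mul_of_mul_sq_le {a b s₁ s₂ θ d : ℝ} (ha : 0 ≤ a) (hb : 0 ≤ b)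
    (hs₁ : 0 < s₁) (hs₂ : 0 ≤ s₂) (h : s₁ * a ^ 2 ≤ Real.exp (-θ * d) * (s₂ * b ^ 2)) :
    a ≤ Real.exp (-(θ / 2) * d) * Real.sqrt (s₂ / s₁) * b := by
  have hexp : Real.exp (-(θ / 2) * d) ^ 2 = Real.exp (-θ * d) := by
    rw [← Real.exp_nat_mul]; ring_nf
  rw [← pow_le_pow_iff_left₀ ha (by positivity) two_ne_zero, mul_pow, mul_pow, hexp,
    Real.sq_sqrt (div_nonneg hs₂ hs₁.le)]
  calc a ^ 2 ≤ Real.exp (-θ * d) * (s₂ * b ^ 2) / s₁ := by rwa [le_div_iff₀' hs₁]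
    _ = _ := by ring

theorem observer_error_norm_bound_general
    {n : ℕ} (C : Matrix (Fin 1) (Fin n) ℝ) (θ t₀ t₁ : ℝ)
    (𝒜 : ℝ → Matrix (Fin n) (Fin n) ℝ)
    (S : ℝ → Matrix (Fin n) (Fin n) ℝ)
    (hSpos : ∀ t ∈ Set.Icc t₀ t₁, (S t).PosDef)
    (hS : ∀ t ∈ Set.Icc t₀ t₁, ∀ i j, HasDerivWithinAt (fun τ => S τ i j)
      ((-(𝒜 t)ᵀ * S t - S t * 𝒜 t - θ • S t + Cᵀ * C) i j) (Set.Icc t₀ t₁) t)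
    (ε : ℝ → EuclideanSpace ℝ (Fin n))
    (hε : ∀ t ∈ Set.Icc t₀ t₁, HasDerivWithinAt ε
      ((WithLp.toLp 2 (𝒜 t *ᵥ ε t - (S t)⁻¹ *ᵥ ((Cᵀ * C) *ᵥ ε t)) : EuclideanSpace ℝ (Fin n)))
      (Set.Icc t₀ t₁) t)
    (s₁ s₂ : ℝ) (hs₁ : 0 < s₁) (hs₂ : 0 < s₂)
    (t : ℝ) (htmem : t ∈ Set.Icc t₀ t₁)
    (hlow : (S t - s₁ • (1 : Matrix (Fin n) (Fin n) ℝ)).PosSemidef)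
    (hup : (s₂ • (1 : Matrix (Fin n) (Fin n) ℝ) - S t₀).PosSemidef) :
    ‖ε t‖ ≤ Real.exp (-(θ / 2) * (t - t₀)) * Real.sqrt (s₂ / s₁) * ‖ε t₀‖ := by
  have hdecay : ε t ⬝ᵥ S t *ᵥ ε t ≤ Real.exp (-θ * (t - t₀)) * (ε t₀ ⬝ᵥ S t₀ *ᵥ ε t₀) :=
    le_exp_mul_of_hasDerivWithinAt_le_neg_mul
      (fun τ hτ => hasDerivWithinAt_observer_lyapunov θ C (hSpos τ hτ) (hS τ hτ) (hε τ hτ))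
      (fun τ _ => sub_le_self _ (by simpa using dotProduct_star_self_nonneg (C *ᵥ ε τ))) htmem
  refine le_exp_mul_sqrt_mul_of_mul_sq_le (norm_nonneg _) (norm_nonneg _) hs₁ hs₂.le ?_
  calc s₁ * ‖ε t‖ ^ 2 ≤ ε t ⬝ᵥ S t *ᵥ ε t := hlow.mul_norm_sq_le_dotProduct_mulVec _
    _ ≤ Real.exp (-θ * (t - t₀)) * (ε t₀ ⬝ᵥ S t₀ *ᵥ ε t₀) := hdecay
    _ ≤ Real.exp (-θ * (t - t₀)) * (s₂ * ‖ε t₀‖ ^ 2) := by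
      gcongr
      exact hup.dotProduct_mulVec_le_mul_norm_sq _

/-- For the observer error `ε' = 𝒜ε − S⁻¹CᵀCε` along the Lyapunov differential
equation with `S(t)` symmetric positive definite, if `S(t) ⪰ s₁·Id` at a given `t ∈ [t₀,t₁]`
and `S(t₀) ⪯ s₂·Id` with `s₁, s₂ > 0`, then
`|ε(t)| ≤ e^{−(θ/2)(t−t₀)} √(s₂/s₁) |ε(t₀)|`. -/
theorem observer_error_norm_bound
    {n : ℕ} (hn : 1 ≤ n) (C : Matrix (Fin 1) (Fin n) ℝ) (θ t₀ t₁ : ℝ) (ht : t₀ ≤ t₁)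
    (𝒜 : ℝ → Matrix (Fin n) (Fin n) ℝ) (h𝒜 : Continuous 𝒜)
    (S : ℝ → Matrix (Fin n) (Fin n) ℝ)
    (hSpos : ∀ t ∈ Set.Icc t₀ t₁, (S t).PosDef)
    (hS : ∀ t ∈ Set.Icc t₀ t₁, ∀ i j, HasDerivWithinAt (fun τ => S τ i j)
      ((-(𝒜 t)ᵀ * S t - S t * 𝒜 t - θ • S t + Cᵀ * C) i j) (Set.Icc t₀ t₁) t)
    (ε : ℝ → EuclideanSpace ℝ (Fin n))
    (hε : ∀ t ∈ Set.Icc t₀ t₁, HasDerivWithinAt ε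
      ((WithLp.toLp 2 (𝒜 t *ᵥ ε t - (S t)⁻¹ *ᵥ ((Cᵀ * C) *ᵥ ε t)) : EuclideanSpace ℝ (Fin n)))
      (Set.Icc t₀ t₁) t)
    (s₁ s₂ : ℝ) (hs₁ : 0 < s₁) (hs₂ : 0 < s₂)
    (t : ℝ) (htmem : t ∈ Set.Icc t₀ t₁)
    (hlow : (S t - s₁ • (1 : Matrix (Fin n) (Fin n) ℝ)).PosSemidef)
    (hup : (s₂ • (1 : Matrix (Fin n) (Fin n) ℝ) - S t₀).PosSemidef) :
    ‖ε t‖ ≤ Real.exp (-(θ / 2) * (t - t₀)) * Real.sqrt (s₂ / s₁) * ‖ε t₀‖ :=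
  observer_error_norm_bound_general C θ t₀ t₁ 𝒜 S hSpos hS ε hε s₁ s₂ hs₁ hs₂ t htmem hlow hup
end

section
/- Let n ≥ 1, C ∈ ℝ^{1×n}, T > 0, let 𝒜 : ℝ → ℝ^{n×n} be continuous, X a fundamental solution with transition matrix Φ(t,s) = X(s)X(t)⁻¹, and G(t₀,t₁) = ∫_{t₀}^{t₁} Φ(t₁,s)ᵀCᵀCΦ(t₁,s) ds. Then the map t ↦ G(t−T, t) is differentiable and d/dt G(t−T,t) = −𝒜(t)ᵀG(t−T,t) − G(t−T,t)𝒜(t) + CᵀC − Φ(t,t−T)ᵀCᵀCΦ(t,t−T) for all t ∈ ℝ. -/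
open Matrix

/-!
Write `Z(t) = X(t)⁻¹` and `W(t) = ∫_{t−T}^{t} X(s)ᵀ CᵀC X(s) ds`. Since `Φ(t,s) = X(s) Z(t)`, the
window Gramian factors as `G(t−T,t) = Z(t)ᵀ W(t) Z(t)`. Differentiating `X Z = 1` gives
`Z' = −Z 𝒜`, and the fundamental theorem of calculus at both ends of the window gives
`W'(t) = X(t)ᵀCᵀC X(t) − X(t−T)ᵀCᵀC X(t−T)`. The product rule then yields the two
`𝒜`-terms from `Z'`, while conjugating `W'` by `Z(t)` gives `CᵀC − Φ(t,t−T)ᵀCᵀCΦ(t,t−T)`.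
-/

theorem hasDerivAt_intervalIntegral_sub_const {E : Type*} [NormedAddCommGroup E]
    [NormedSpace ℝ E] [CompleteSpace E] {f : ℝ → E} (hf : Continuous f) (T t : ℝ) :
    HasDerivAt (fun τ => ∫ s in τ - T..τ, f s) (f t - f (t - T)) t := by
  have hupper := (hf.integral_hasStrictDerivAt 0 t).hasDerivAt
  have hlower := (hf.integral_hasStrictDerivAt 0 (t - T)).hasDerivAt.comp_sub_const t T
  convert hupper.sub hlower using 1
  ext τ
  rw [Pi.sub_apply, intervalIntegral.integral_interval_sub_left (hf.intervalIntegrable _ _)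
    (hf.intervalIntegrable _ _)]

namespace Matrix

variable {m n : Type*}

theorem hasDerivAt_iff [Fintype n] {F : ℝ → Matrix m n ℝ} {F' : Matrix m n ℝ} {t : ℝ} :
    HasDerivAt F F' t ↔ ∀ i j, HasDerivAt (fun τ => F τ i j) (F' i j) t :=
  hasDerivAt_pi.trans (forall_congr' fun _ => hasDerivAt_pi)

theorem _root_.HasDerivAt.matrix_transpose [Fintype m] [Fintype n] {F : ℝ → Matrix m n ℝ}
    {F' : Matrix m n ℝ} {t : ℝ} (hF : HasDerivAt F F' t) :
    HasDerivAt (fun τ => (F τ)ᵀ) F'ᵀ t :=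
  hasDerivAt_iff.2 fun i j => hasDerivAt_iff.1 hF j i

section Ring

-- `HasDerivAt` only sees the topology, so any submultiplicative matrix norm serves here.
attribute [local instance] Matrix.linftyOpNormedRing Matrix.linftyOpNormedAlgebra

variable [Fintype n] [DecidableEq n]

theorem _root_.HasDerivAt.matrix_mul {F G : ℝ → Matrix n n ℝ} {F' G' : Matrix n n ℝ} {t : ℝ}
    (hF : HasDerivAt F F' t) (hG : HasDerivAt G G' t) :
    HasDerivAt (fun τ => F τ * G τ) (F' * G t + F t * G') t :=
  hF.mul hG

theorem _root_.HasDerivAt.matrix_inv {F : ℝ → Matrix n n ℝ} {F' : Matrix n n ℝ} {t : ℝ}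
    (hF : HasDerivAt F F' t) (hunit : IsUnit (F t)) :
    HasDerivAt (fun τ => (F τ)⁻¹) (-((F t)⁻¹ * F' * (F t)⁻¹)) t := by
  obtain ⟨u, hu⟩ := hunit
  have h := (hasFDerivAt_ringInverse (𝕜 := ℝ) u).comp_hasDerivAt_of_eq t hF hu
  simp only [nonsing_inv_eq_ringInverse, ← hu, Ring.inverse_unit]
  simp only [Function.comp_def, _root_.neg_apply, ContinuousLinearMap.mulLeftRight_apply] at h
  exact h

end Ring

theorem _root_.HasDerivAt.matrix_transpose_mul_mul [Fintype n] {Z W : ℝ → Matrix n n ℝ}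
    {Z' W' : Matrix n n ℝ} {t : ℝ} (hZ : HasDerivAt Z Z' t) (hW : HasDerivAt W W' t) :
    HasDerivAt (fun τ => (Z τ)ᵀ * W τ * Z τ)
      (Z'ᵀ * W t * Z t + (Z t)ᵀ * W' * Z t + (Z t)ᵀ * W t * Z') t := by
  classical
  convert (hZ.matrix_transpose.matrix_mul hW).matrix_mul hZ using 1
  noncomm_ring

theorem of_intervalIntegral_mul_mul [Fintype n] {Y : ℝ → Matrix n n ℝ} {a b : ℝ}
    (hY : ∀ i j, IntervalIntegrable (fun s => Y s i j) MeasureTheory.volume a b)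
    (P Q : Matrix n n ℝ) :
    of (fun i j => ∫ s in a..b, (P * Y s * Q) i j)
      = P * of (fun i j => ∫ s in a..b, Y s i j) * Q := by
  ext i j
  have hterm : ∀ k l, IntervalIntegrable (fun s => P i k * Y s k l * Q l j)
      MeasureTheory.volume a b := fun k l => ((hY k l).const_mul _).mul_const _
  simp only [of_apply, mul_apply, Finset.sum_mul]
  rw [intervalIntegral.integral_finsetSum fun l _ => by
    simpa only [Finset.sum_fn] using IntervalIntegrable.sum Finset.univ fun k _ => hterm k l]
  refine Finset.sum_congr rfl fun l _ => ?_
  rw [intervalIntegral.integral_finsetSum fun k _ => hterm k l]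
  refine Finset.sum_congr rfl fun k _ => ?_
  rw [intervalIntegral.integral_mul_const, intervalIntegral.integral_const_mul]

end Matrix

theorem HasDerivAt.matrix_inv_of_linear {n : Type*} [Fintype n] [DecidableEq n]
    {X : ℝ → Matrix n n ℝ} {A : Matrix n n ℝ} {t : ℝ}
    (hX : HasDerivAt X (A * X t) t) (hunit : IsUnit (X t)) :
    HasDerivAt (fun τ => (X τ)⁻¹) (-((X t)⁻¹ * A)) t := by
  convert hX.matrix_inv hunit using 2
  rw [Matrix.mul_assoc, Matrix.mul_assoc, mul_nonsing_inv _ ((isUnit_iff_isUnit_det _).1 hunit),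
    Matrix.mul_one]

theorem sliding_gramian_deriv_general
    {n : ℕ} (C : Matrix (Fin 1) (Fin n) ℝ) (T : ℝ)
    (𝒜 X : ℝ → Matrix (Fin n) (Fin n) ℝ)
    (hX : ∀ t : ℝ, ∀ i j, HasDerivAt (fun τ => X τ i j) ((𝒜 t * X t) i j) t)
    (hXinv : ∀ t : ℝ, IsUnit (X t))
    (G : ℝ → ℝ → Matrix (Fin n) (Fin n) ℝ)
    (hG : ∀ t₀ t₁ : ℝ, G t₀ t₁ = Matrix.of fun i j =>
      ∫ s in t₀..t₁, ((X s * (X t₁)⁻¹)ᵀ * Cᵀ * C * (X s * (X t₁)⁻¹)) i j) :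
    ∀ t : ℝ, ∀ i j,
      HasDerivAt (fun τ => G (τ - T) τ i j)
        ((-(𝒜 t)ᵀ * G (t - T) t - G (t - T) t * 𝒜 t + Cᵀ * C
          - (X (t - T) * (X t)⁻¹)ᵀ * Cᵀ * C * (X (t - T) * (X t)⁻¹)) i j) t := by
  intro t
  have hXc : Continuous X := continuous_matrix fun i j =>
    continuous_iff_continuousAt.2 fun τ => (hX τ i j).continuousAt
  set Y : ℝ → Matrix (Fin n) (Fin n) ℝ := fun s => (X s)ᵀ * Cᵀ * C * X s with hY
  have hYc : Continuous Y := by fun_prop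
  set W : ℝ → Matrix (Fin n) (Fin n) ℝ := fun τ => of fun k l => ∫ s in τ - T..τ, Y s k l
  have hW : HasDerivAt W (Y t - Y (t - T)) t := hasDerivAt_iff.2 fun k l =>
    hasDerivAt_intervalIntegral_sub_const (hYc.matrix_elem k l) T t
  have hconj : ∀ s τ,
      (X s * (X τ)⁻¹)ᵀ * Cᵀ * C * (X s * (X τ)⁻¹) = ((X τ)⁻¹)ᵀ * Y s * (X τ)⁻¹ := fun s τ => by
    simp only [hY, transpose_mul, Matrix.mul_assoc]
  have hGW : ∀ τ, G (τ - T) τ = ((X τ)⁻¹)ᵀ * W τ * (X τ)⁻¹ := fun τ => by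
    rw [hG, ← of_intervalIntegral_mul_mul fun k l => (hYc.matrix_elem k l).intervalIntegrable _ _]
    simp only [hconj]
  have hCC : ((X t)⁻¹)ᵀ * Y t * (X t)⁻¹ = Cᵀ * C := by
    rw [← hconj, mul_nonsing_inv _ ((isUnit_iff_isUnit_det _).1 (hXinv t)), transpose_one,
      Matrix.one_mul, Matrix.mul_one]
  have hderiv :=
    ((hasDerivAt_iff.2 (hX t)).matrix_inv_of_linear (hXinv t)).matrix_transpose_mul_mul hW
  simp only [hGW]
  refine hasDerivAt_iff.1 ?_
  convert hderiv using 1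
  rw [hconj, ← hCC, transpose_neg, transpose_mul]
  noncomm_ring

/-- The sliding-window observability Gramian
`G(t−T,t) = ∫_{t−T}^{t} Φ(t,s)ᵀ CᵀC Φ(t,s) ds` (with `Φ(t,s) = X(s) X(t)⁻¹`) satisfies
`d/dt G(t−T,t) = −𝒜(t)ᵀG(t−T,t) − G(t−T,t)𝒜(t) + CᵀC − Φ(t,t−T)ᵀCᵀCΦ(t,t−T)`.
(Stated entrywise.) -/
theorem sliding_gramian_deriv
    {n : ℕ} (hn : 1 ≤ n) (C : Matrix (Fin 1) (Fin n) ℝ) (T : ℝ) (hT : 0 < T)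
    (𝒜 X : ℝ → Matrix (Fin n) (Fin n) ℝ)
    (h𝒜 : Continuous 𝒜)
    (hX : ∀ t : ℝ, ∀ i j, HasDerivAt (fun τ => X τ i j) ((𝒜 t * X t) i j) t)
    (hXinv : ∀ t : ℝ, IsUnit (X t))
    (G : ℝ → ℝ → Matrix (Fin n) (Fin n) ℝ)
    (hG : ∀ t₀ t₁ : ℝ, G t₀ t₁ = Matrix.of fun i j =>
      ∫ s in t₀..t₁, ((X s * (X t₁)⁻¹)ᵀ * Cᵀ * C * (X s * (X t₁)⁻¹)) i j) :
    ∀ t : ℝ, ∀ i j,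
      HasDerivAt (fun τ => G (τ - T) τ i j)
        ((-(𝒜 t)ᵀ * G (t - T) t - G (t - T) t * 𝒜 t + Cᵀ * C
          - (X (t - T) * (X t)⁻¹)ᵀ * Cᵀ * C * (X (t - T) * (X t)⁻¹)) i j) t :=
  sliding_gramian_deriv_general C T 𝒜 X hX hXinv G hG
end

section
/- Let n ≥ 1, A ∈ ℝ^{n×n}, C ∈ ℝ^{1×n}, and β > 2‖A‖ (operator norm). Then S∞ := ∫₀^∞ e^{−βs} exp(−sAᵀ) CᵀC exp(−sA) ds converges, is the unique symmetric matrix satisfying the Lyapunov equation AᵀS + SA + βS = CᵀC, and is positive semidefinite. Moreover S∞ is positive definite if and only if the pair (C,A) is observable, i.e., for every x ∈ ℝⁿ, (C·exp(tA)·x = 0 for all t ≥ 0) implies x = 0. -/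
/-!
The flow `M(s) = e^{-βs} e^{-sAᵀ} K e^{-sA}` solves `M' = -L M` for the Lyapunov operator
`L S = AᵀS + SA + βS`, commutes with `L`, and decays like `e^{-(β - 2‖A‖)s}` because
`‖e^{-sA}‖ ≤ e^{s‖A‖}`. Integrating `M' = -L M` from `0` to `∞` with `K = S` gives
`∫₀^∞ e^{-βs} e^{-sAᵀ} (L S) e^{-sA} ds = S` for every `S`, which is at once existence,
uniqueness and, since `L` commutes with transposition, symmetry of the solution `S∞` of `L S = CᵀC`.
Its quadratic form is `xᵀ S∞ x = ∫₀^∞ e^{-βs} |C e^{-sA} x|² ds`, so `S∞ ⪰ 0`, and `xᵀ S∞ x = 0`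
iff `C e^{-sA} x` vanishes for `s > 0`; as `t ↦ C e^{tA} x` is real analytic, this happens iff it
vanishes for all `t ≥ 0`.
-/

open Matrix Set

open MeasureTheory Filter Topology
open scoped Matrix.Norms.L2Operator

theorem NormedSpace.norm_exp_le_exp_norm {𝔸 : Type*} [NormedRing 𝔸] [NormedAlgebra ℝ 𝔸]
    [CompleteSpace 𝔸] (h1 : ‖(1 : 𝔸)‖ ≤ 1) (x : 𝔸) : ‖exp x‖ ≤ Real.exp ‖x‖ := by
  rw [exp_eq_tsum ℝ, Real.exp_eq_exp_ℝ, exp_eq_tsum_div]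
  refine (norm_tsum_le_tsum_norm (norm_expSeries_summable' x)).trans <|
    Summable.tsum_le_tsum (fun k => ?_) (norm_expSeries_summable' x)
      (Real.summable_pow_div_factorial ‖x‖)
  rw [norm_smul, norm_inv, Real.norm_natCast, div_eq_inv_mul]
  gcongr
  rcases Nat.eq_zero_or_pos k with rfl | hk
  · simpa using h1
  · exact norm_pow_le' x hk

theorem setIntegral_eq_zero_iff_of_continuousOn {X : Type*} [TopologicalSpace X]
    [MeasurableSpace X] [OpensMeasurableSpace X] {μ : Measure X} [μ.IsOpenPosMeasure]
    {f : X → ℝ} {U : Set X} (hU : IsOpen U) (hf : ContinuousOn f U) (hnn : ∀ x ∈ U, 0 ≤ f x)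
    (hint : IntegrableOn f U μ) : ∫ x in U, f x ∂μ = 0 ↔ EqOn f 0 U := by
  rw [setIntegral_eq_zero_iff_of_nonneg_ae ((ae_restrict_iff' hU.measurableSet).2
    (Eventually.of_forall hnn)) hint]
  exact ⟨fun h => Measure.eqOn_open_of_ae_eq h hU hf continuousOn_const,
    fun h => (ae_restrict_iff' hU.measurableSet).2 (Eventually.of_forall h)⟩

theorem LinearMap.integral_comp_comm_of_finiteDimensional {X E F : Type*} [MeasurableSpace X]
    {μ : Measure X} [NormedAddCommGroup E] [NormedSpace ℝ E] [FiniteDimensional ℝ E]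
    [NormedAddCommGroup F] [NormedSpace ℝ F] [CompleteSpace F] (φ : E →ₗ[ℝ] F) {f : X → E}
    (hf : Integrable f μ) : ∫ x, φ (f x) ∂μ = φ (∫ x, f x ∂μ) :=
  (LinearMap.toContinuousLinearMap φ).integral_comp_comm hf

theorem LinearMap.integrable_comp_of_finiteDimensional {X E F : Type*} [MeasurableSpace X]
    {μ : Measure X} [NormedAddCommGroup E] [NormedSpace ℝ E] [FiniteDimensional ℝ E]
    [NormedAddCommGroup F] [NormedSpace ℝ F] (φ : E →ₗ[ℝ] F) {f : X → E}
    (hf : Integrable f μ) : Integrable (fun x => φ (f x)) μ :=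
  (LinearMap.toContinuousLinearMap φ).integrable_comp hf

def Matrix.evalQuadraticForm {ι : Type*} [Fintype ι] (x : ι → ℝ) : Matrix ι ι ℝ →ₗ[ℝ] ℝ where
  toFun M := x ⬝ᵥ (M *ᵥ x)
  map_add' M N := by rw [add_mulVec, dotProduct_add]
  map_smul' c M := by rw [smul_mulVec, dotProduct_smul]; rfl

theorem Matrix.evalQuadraticForm_apply {ι : Type*} [Fintype ι] (x : ι → ℝ) (M : Matrix ι ι ℝ) :
    evalQuadraticForm x M = x ⬝ᵥ (M *ᵥ x) := rfl

theorem Matrix.PosSemidef.posDef_iff {n R : Type*} [Fintype n] [Ring R] [PartialOrder R]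
    [StarRing R] {M : Matrix n n R} (hM : M.PosSemidef) :
    M.PosDef ↔ ∀ x, star x ⬝ᵥ (M *ᵥ x) = 0 → x = 0 := by
  have hM' := posSemidef_iff_dotProduct_mulVec.1 hM
  rw [posDef_iff_dotProduct_mulVec]
  refine ⟨fun h x hx => by_contra fun hx0 => (h.2 hx0).ne' hx, fun h => ⟨hM'.1, fun x hx => ?_⟩⟩
  exact (hM'.2 x).lt_of_ne fun h0 => hx (h x h0.symm)

section MatrixNorm
variable {ι : Type*} [Fintype ι] [DecidableEq ι]

theorem Matrix.l2_opNorm_one_le {𝕜 : Type*} [RCLike 𝕜] : ‖(1 : Matrix ι ι 𝕜)‖ ≤ 1 := by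
  rw [cstar_norm_def, map_one]
  exact ContinuousLinearMap.norm_id_le

theorem Matrix.l2_opNorm_transpose (A : Matrix ι ι ℝ) : ‖Aᵀ‖ = ‖A‖ := by
  rw [← conjTranspose_eq_transpose_of_trivial, l2_opNorm_conjTranspose]

theorem Matrix.norm_exp_neg_smul_le (A : Matrix ι ι ℝ) {s : ℝ} (hs : 0 ≤ s) :
    ‖NormedSpace.exp ((-s) • A)‖ ≤ Real.exp (s * ‖A‖) := by
  simpa [norm_smul, abs_of_nonneg hs] using
    NormedSpace.norm_exp_le_exp_norm l2_opNorm_one_le ((-s) • A)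

end MatrixNorm

section Lyapunov
variable {ι : Type*} [Fintype ι] (A : Matrix ι ι ℝ) (β : ℝ)

noncomputable def lyapunovMap : Matrix ι ι ℝ →ₗ[ℝ] Matrix ι ι ℝ where
  toFun S := Aᵀ * S + S * A + β • S
  map_add' S T := by simp only [Matrix.mul_add, Matrix.add_mul, smul_add]; abel
  map_smul' c S := by simp only [Matrix.mul_smul, Matrix.smul_mul, smul_add, smul_comm β c]; rfl

theorem lyapunovMap_apply (S : Matrix ι ι ℝ) : lyapunovMap A β S = Aᵀ * S + S * A + β • S := rfl

theorem lyapunovMap_transpose (S : Matrix ι ι ℝ) :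
    lyapunovMap A β Sᵀ = (lyapunovMap A β S)ᵀ := by
  simp only [lyapunovMap_apply, transpose_add, transpose_mul, transpose_smul, transpose_transpose]
  abel

variable [DecidableEq ι]

noncomputable def lyapunovFlow (K : Matrix ι ι ℝ) (s : ℝ) : Matrix ι ι ℝ :=
  Real.exp (-β * s) • (NormedSpace.exp ((-s) • Aᵀ) * K * NormedSpace.exp ((-s) • A))

theorem lyapunovFlow_zero (K : Matrix ι ι ℝ) : lyapunovFlow A β K 0 = K := by
  simp [lyapunovFlow]

theorem lyapunovMap_lyapunovFlow (K : Matrix ι ι ℝ) (s : ℝ) :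
    lyapunovMap A β (lyapunovFlow A β K s) = lyapunovFlow A β (lyapunovMap A β K) s := by
  have hAT : Commute Aᵀ (NormedSpace.exp ((-s) • Aᵀ)) :=
    ((Commute.refl Aᵀ).smul_right (-s)).exp_right
  have hA : Commute A (NormedSpace.exp ((-s) • A)) := ((Commute.refl A).smul_right (-s)).exp_right
  simp only [lyapunovFlow, map_smul, lyapunovMap_apply, Matrix.mul_add, Matrix.add_mul,
    Matrix.mul_smul, Matrix.smul_mul, ← Matrix.mul_assoc, hAT.eq]
  simp only [Matrix.mul_assoc, hA.eq]

theorem hasDerivAt_lyapunovFlow (K : Matrix ι ι ℝ) (s : ℝ) :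
    HasDerivAt (lyapunovFlow A β K) (-lyapunovMap A β (lyapunovFlow A β K s)) s := by
  have hexpT : HasDerivAt (fun u : ℝ => NormedSpace.exp ((-u) • Aᵀ))
      (-Aᵀ * NormedSpace.exp ((-s) • Aᵀ)) s := by
    simpa [smul_neg, ← neg_smul] using hasDerivAt_exp_smul_const' (𝕂 := ℝ) (-Aᵀ) s
  have hexp : HasDerivAt (fun u : ℝ => NormedSpace.exp ((-u) • A))
      (NormedSpace.exp ((-s) • A) * -A) s := by
    simpa [smul_neg, ← neg_smul] using hasDerivAt_exp_smul_const (𝕂 := ℝ) (-A) s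
  have hweight : HasDerivAt (fun u : ℝ => Real.exp (-β * u)) (Real.exp (-β * s) * -β) s := by
    simpa using ((hasDerivAt_id s).const_mul (-β)).exp
  refine (hweight.smul ((hexpT.mul_const K).mul hexp)).congr_deriv ?_
  simp only [lyapunovFlow, lyapunovMap_apply, Matrix.mul_smul, Matrix.smul_mul, neg_mul,
    Matrix.mul_neg, Matrix.mul_assoc, Pi.mul_apply]
  module

theorem norm_lyapunovFlow_le (K : Matrix ι ι ℝ) {s : ℝ} (hs : 0 ≤ s) :
    ‖lyapunovFlow A β K s‖ ≤ ‖K‖ * Real.exp (-(β - 2 * ‖A‖) * s) := by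
  have hexpT := Aᵀ.norm_exp_neg_smul_le hs
  rw [l2_opNorm_transpose] at hexpT
  calc ‖lyapunovFlow A β K s‖
      ≤ Real.exp (-β * s) * (‖NormedSpace.exp ((-s) • Aᵀ)‖ * ‖K‖ *
          ‖NormedSpace.exp ((-s) • A)‖) := by
        rw [lyapunovFlow, norm_smul, Real.norm_of_nonneg (Real.exp_pos _).le]
        gcongr
        exact (norm_mul_le _ _).trans (by gcongr; exact norm_mul_le _ _)
    _ ≤ Real.exp (-β * s) * (Real.exp (s * ‖A‖) * ‖K‖ * Real.exp (s * ‖A‖)) := by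
        gcongr
        exact A.norm_exp_neg_smul_le hs
    _ = ‖K‖ * Real.exp (-(β - 2 * ‖A‖) * s) := by
        rw [show -(β - 2 * ‖A‖) * s = -β * s + s * ‖A‖ + s * ‖A‖ by ring, Real.exp_add,
          Real.exp_add]
        ring

theorem continuous_lyapunovFlow (K : Matrix ι ι ℝ) : Continuous (lyapunovFlow A β K) :=
  continuous_iff_continuousAt.2 fun s => (hasDerivAt_lyapunovFlow A β K s).continuousAt

variable {A β}

theorem integrableOn_lyapunovFlow (hβ : 2 * ‖A‖ < β) (K : Matrix ι ι ℝ) :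
    IntegrableOn (lyapunovFlow A β K) (Ioi 0) := by
  refine Integrable.mono' ((exp_neg_integrableOn_Ioi 0 (sub_pos.2 hβ)).const_mul ‖K‖)
    (continuous_lyapunovFlow A β K).aestronglyMeasurable ?_
  filter_upwards [ae_restrict_mem measurableSet_Ioi] with s hs
  exact norm_lyapunovFlow_le A β K (le_of_lt hs)

theorem tendsto_lyapunovFlow_atTop (hβ : 2 * ‖A‖ < β) (K : Matrix ι ι ℝ) :
    Tendsto (lyapunovFlow A β K) atTop (𝓝 0) := by
  have hdecay : Tendsto (fun s => ‖K‖ * Real.exp (-(β - 2 * ‖A‖) * s)) atTop (𝓝 0) := by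
    simpa using (Real.tendsto_exp_atBot.comp <|
      tendsto_id.const_mul_atTop_of_neg (neg_lt_zero.2 (sub_pos.2 hβ))).const_mul ‖K‖
  refine squeeze_zero_norm' ?_ hdecay
  filter_upwards [eventually_ge_atTop 0] with s hs
  exact norm_lyapunovFlow_le A β K hs

variable (A β) in
noncomputable def lyapunovIntegral (K : Matrix ι ι ℝ) : Matrix ι ι ℝ :=
  ∫ s in Ioi 0, lyapunovFlow A β K s

theorem lyapunovIntegral_lyapunovMap (hβ : 2 * ‖A‖ < β) (S : Matrix ι ι ℝ) :
    lyapunovIntegral A β (lyapunovMap A β S) = S := by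
  have hderiv : ∀ s, HasDerivAt (lyapunovFlow A β S) (-lyapunovFlow A β (lyapunovMap A β S) s) s :=
    fun s => lyapunovMap_lyapunovFlow A β S s ▸ hasDerivAt_lyapunovFlow A β S s
  have hftc := integral_Ioi_of_hasDerivAt_of_tendsto' (fun s _ => hderiv s)
    (integrableOn_lyapunovFlow hβ _).neg (tendsto_lyapunovFlow_atTop hβ S)
  rwa [integral_neg, lyapunovFlow_zero, zero_sub, neg_inj] at hftc

theorem lyapunovMap_lyapunovIntegral (hβ : 2 * ‖A‖ < β) (K : Matrix ι ι ℝ) :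
    lyapunovMap A β (lyapunovIntegral A β K) = K := by
  rw [lyapunovIntegral, ← LinearMap.integral_comp_comm_of_finiteDimensional _
    (integrableOn_lyapunovFlow hβ K)]
  simp_rw [lyapunovMap_lyapunovFlow]
  exact lyapunovIntegral_lyapunovMap hβ K

theorem transpose_lyapunovIntegral (hβ : 2 * ‖A‖ < β) {K : Matrix ι ι ℝ} (hK : Kᵀ = K) :
    (lyapunovIntegral A β K)ᵀ = lyapunovIntegral A β K := by
  conv_lhs => rw [← lyapunovIntegral_lyapunovMap hβ (lyapunovIntegral A β K)ᵀ,
    lyapunovMap_transpose, lyapunovMap_lyapunovIntegral hβ, hK]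

theorem dotProduct_lyapunovIntegral_mulVec (hβ : 2 * ‖A‖ < β) (K : Matrix ι ι ℝ) (x : ι → ℝ) :
    x ⬝ᵥ (lyapunovIntegral A β K *ᵥ x) = ∫ s in Ioi 0, x ⬝ᵥ (lyapunovFlow A β K s *ᵥ x) :=
  (LinearMap.integral_comp_comm_of_finiteDimensional (evalQuadraticForm x)
    (integrableOn_lyapunovFlow hβ K)).symm

section Observability
variable {m : Type*} [Fintype m]

variable (A) in
theorem analyticAt_mulVec_exp_smul_mulVec (C : Matrix m ι ℝ) (x : ι → ℝ) (t : ℝ) :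
    AnalyticAt ℝ (fun t : ℝ => C *ᵥ (NormedSpace.exp (t • A) *ᵥ x)) t := by
  let observe : Matrix ι ι ℝ →ₗ[ℝ] m → ℝ :=
    (Matrix.toLin' C).comp ((LinearMap.applyₗ x).comp (Matrix.toLin' (R := ℝ)).toLinearMap)
  exact (LinearMap.toContinuousLinearMap observe).analyticAt _ |>.comp <|
    (NormedSpace.exp_analytic _).comp (analyticAt_id.smul analyticAt_const)

variable (β) in
theorem dotProduct_lyapunovFlow_mulVec (C : Matrix m ι ℝ) (x : ι → ℝ) (s : ℝ) :
    x ⬝ᵥ (lyapunovFlow A β (Cᵀ * C) s *ᵥ x) = Real.exp (-β * s) *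
      ((C *ᵥ (NormedSpace.exp ((-s) • A) *ᵥ x)) ⬝ᵥ (C *ᵥ (NormedSpace.exp ((-s) • A) *ᵥ x))) := by
  set E := NormedSpace.exp ((-s) • A)
  have hgram : Eᵀ * (Cᵀ * C) * E = (C * E)ᵀ * (C * E) := by
    simp only [transpose_mul, Matrix.mul_assoc]
  rw [lyapunovFlow, ← transpose_smul, exp_transpose, hgram, smul_mulVec, dotProduct_smul,
    smul_eq_mul, ← mulVec_mulVec, dotProduct_mulVec, vecMul_transpose, mulVec_mulVec]

theorem dotProduct_lyapunovFlow_mulVec_nonneg (C : Matrix m ι ℝ) (x : ι → ℝ) (s : ℝ) :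
    0 ≤ x ⬝ᵥ (lyapunovFlow A β (Cᵀ * C) s *ᵥ x) := by
  rw [dotProduct_lyapunovFlow_mulVec]
  exact mul_nonneg (Real.exp_pos _).le <| Finset.sum_nonneg fun _ _ => mul_self_nonneg _

theorem posSemidef_lyapunovIntegral (hβ : 2 * ‖A‖ < β) (C : Matrix m ι ℝ) :
    (lyapunovIntegral A β (Cᵀ * C)).PosSemidef := by
  refine posSemidef_iff_dotProduct_mulVec.2 ⟨?_, fun x => ?_⟩
  · rw [IsHermitian, conjTranspose_eq_transpose_of_trivial]
    exact transpose_lyapunovIntegral hβ (by rw [transpose_mul, transpose_transpose])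
  · rw [star_trivial, dotProduct_lyapunovIntegral_mulVec hβ]
    exact integral_nonneg fun s => dotProduct_lyapunovFlow_mulVec_nonneg C x s

theorem dotProduct_lyapunovIntegral_mulVec_eq_zero_iff (hβ : 2 * ‖A‖ < β) (C : Matrix m ι ℝ)
    (x : ι → ℝ) : x ⬝ᵥ (lyapunovIntegral A β (Cᵀ * C) *ᵥ x) = 0 ↔
      ∀ s ∈ Ioi (0 : ℝ), C *ᵥ (NormedSpace.exp ((-s) • A) *ᵥ x) = 0 := by
  have hcont : Continuous fun s => x ⬝ᵥ (lyapunovFlow A β (Cᵀ * C) s *ᵥ x) :=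
    (LinearMap.continuous_of_finiteDimensional (evalQuadraticForm x)).comp
      (continuous_lyapunovFlow A β _)
  rw [dotProduct_lyapunovIntegral_mulVec hβ, setIntegral_eq_zero_iff_of_continuousOn isOpen_Ioi
    hcont.continuousOn (fun s _ => dotProduct_lyapunovFlow_mulVec_nonneg C x s)
    (LinearMap.integrable_comp_of_finiteDimensional (evalQuadraticForm x)
      (integrableOn_lyapunovFlow hβ _))]
  have hzero : ∀ s, x ⬝ᵥ (lyapunovFlow A β (Cᵀ * C) s *ᵥ x) = 0 ↔
      C *ᵥ (NormedSpace.exp ((-s) • A) *ᵥ x) = 0 := fun s => by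
    rw [dotProduct_lyapunovFlow_mulVec, mul_eq_zero, or_iff_right (Real.exp_pos _).ne',
      dotProduct_self_eq_zero]
  exact ⟨fun h s hs => (hzero s).1 (h hs), fun h s hs => (hzero s).2 (h s hs)⟩

variable (A) in
theorem forall_mulVec_exp_neg_smul_mulVec_eq_zero_iff (C : Matrix m ι ℝ) (x : ι → ℝ) :
    (∀ s ∈ Ioi (0 : ℝ), C *ᵥ (NormedSpace.exp ((-s) • A) *ᵥ x) = 0) ↔
      ∀ t : ℝ, 0 ≤ t → C *ᵥ (NormedSpace.exp (t • A) *ᵥ x) = 0 := by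
  set y := fun t : ℝ => C *ᵥ (NormedSpace.exp (t • A) *ᵥ x)
  have hy : AnalyticOnNhd ℝ y univ := fun t _ => analyticAt_mulVec_exp_smul_mulVec A C x t
  have identity : ∀ t₀ : ℝ, ∀ U ∈ 𝓝 t₀, EqOn y 0 U → ∀ t, y t = 0 := fun _ U hU h t =>
    congrFun (hy.eq_of_eventuallyEq analyticOnNhd_const (eventuallyEq_of_mem hU h)) t
  constructor
  · intro h
    refine fun t _ => identity (-1) (Iio 0) (Iio_mem_nhds (by norm_num)) ?_ t
    intro u hu
    simpa [y] using h (-u) (neg_pos.2 (mem_Iio.1 hu))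
  · intro h
    refine fun s _ => identity 1 (Ioi 0) (Ioi_mem_nhds one_pos) (fun t ht => h t (le_of_lt ht)) _

theorem posDef_lyapunovIntegral_iff (hβ : 2 * ‖A‖ < β) (C : Matrix m ι ℝ) :
    (lyapunovIntegral A β (Cᵀ * C)).PosDef ↔
      ∀ x : ι → ℝ, (∀ t : ℝ, 0 ≤ t → C *ᵥ (NormedSpace.exp (t • A) *ᵥ x) = 0) → x = 0 := by
  simp only [(posSemidef_lyapunovIntegral hβ C).posDef_iff, star_trivial,
    dotProduct_lyapunovIntegral_mulVec_eq_zero_iff hβ,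
    forall_mulVec_exp_neg_smul_mulVec_eq_zero_iff]

end Observability

end Lyapunov

theorem lyapunov_equation_solution_general
    {n : ℕ} (A : Matrix (Fin n) (Fin n) ℝ) (C : Matrix (Fin 1) (Fin n) ℝ)
    (β : ℝ) (hβ : 2 * ‖Matrix.toEuclideanCLM (𝕜 := ℝ) A‖ < β)
    (Sinf : Matrix (Fin n) (Fin n) ℝ)
    (hSinf : Sinf = Matrix.of fun i j => ∫ s in Set.Ioi (0:ℝ),
      Real.exp (-β * s) *
        ((NormedSpace.exp ((-s) • Aᵀ) * Cᵀ * C * NormedSpace.exp ((-s) • A)) i j)) :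
    (∀ i j, MeasureTheory.IntegrableOn (fun s => Real.exp (-β * s) *
        ((NormedSpace.exp ((-s) • Aᵀ) * Cᵀ * C * NormedSpace.exp ((-s) • A)) i j))
        (Set.Ioi (0:ℝ)))
    ∧ Sinfᵀ = Sinf
    ∧ Aᵀ * Sinf + Sinf * A + β • Sinf = Cᵀ * C
    ∧ (∀ S : Matrix (Fin n) (Fin n) ℝ, Sᵀ = S → Aᵀ * S + S * A + β • S = Cᵀ * C → S = Sinf)
    ∧ Sinf.PosSemidef
    ∧ (Sinf.PosDef ↔ ∀ x : Fin n → ℝ,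
        (∀ t : ℝ, 0 ≤ t → C *ᵥ (NormedSpace.exp (t • A) *ᵥ x) = 0) → x = 0) := by
  -- the scoped L2 operator norm of `A` is `‖toEuclideanCLM A‖` by definition
  have hβ' : 2 * ‖A‖ < β := hβ
  have hflow : ∀ i j, (fun s => Real.exp (-β * s) *
      ((NormedSpace.exp ((-s) • Aᵀ) * Cᵀ * C * NormedSpace.exp ((-s) • A)) i j)) =
        fun s => entryLinearMap ℝ ℝ i j (lyapunovFlow A β (Cᵀ * C) s) := fun i j => by
    simp [lyapunovFlow, Matrix.mul_assoc]
  have hint := integrableOn_lyapunovFlow hβ' (Cᵀ * C)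
  obtain rfl : Sinf = lyapunovIntegral A β (Cᵀ * C) := by
    ext i j
    rw [hSinf, of_apply, hflow, LinearMap.integral_comp_comm_of_finiteDimensional _ hint]
    rfl
  refine ⟨fun i j => hflow i j ▸ LinearMap.integrable_comp_of_finiteDimensional _ hint,
    transpose_lyapunovIntegral hβ' (by rw [transpose_mul, transpose_transpose]),
    lyapunovMap_lyapunovIntegral hβ' _, fun S _ hS => ?_, posSemidef_lyapunovIntegral hβ' C,
    posDef_lyapunovIntegral_iff hβ' C⟩
  exact (lyapunovIntegral_lyapunovMap hβ' S).symm.trans (congrArg (lyapunovIntegral A β) hS)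

/-- For `β > 2‖A‖` (operator norm), the matrix
`Sinf = ∫₀^∞ e^{−βs} e^{−sAᵀ} CᵀC e^{−sA} ds` converges (entrywise), is the unique symmetric
solution of the Lyapunov equation `AᵀS + SA + βS = CᵀC`, is positive semidefinite, and is
positive definite iff the pair `(C, A)` is observable. -/
theorem lyapunov_equation_solution
    {n : ℕ} (hn : 1 ≤ n) (A : Matrix (Fin n) (Fin n) ℝ) (C : Matrix (Fin 1) (Fin n) ℝ)
    (β : ℝ) (hβ : 2 * ‖Matrix.toEuclideanCLM (𝕜 := ℝ) A‖ < β)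
    (Sinf : Matrix (Fin n) (Fin n) ℝ)
    (hSinf : Sinf = Matrix.of fun i j => ∫ s in Set.Ioi (0:ℝ),
      Real.exp (-β * s) *
        ((NormedSpace.exp ((-s) • Aᵀ) * Cᵀ * C * NormedSpace.exp ((-s) • A)) i j)) :
    (∀ i j, MeasureTheory.IntegrableOn (fun s => Real.exp (-β * s) *
        ((NormedSpace.exp ((-s) • Aᵀ) * Cᵀ * C * NormedSpace.exp ((-s) • A)) i j))
        (Set.Ioi (0:ℝ)))
    ∧ Sinfᵀ = Sinf
    ∧ Aᵀ * Sinf + Sinf * A + β • Sinf = Cᵀ * C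
    ∧ (∀ S : Matrix (Fin n) (Fin n) ℝ, Sᵀ = S → Aᵀ * S + S * A + β • S = Cᵀ * C → S = Sinf)
    ∧ Sinf.PosSemidef
    ∧ (Sinf.PosDef ↔ ∀ x : Fin n → ℝ,
        (∀ t : ℝ, 0 ≤ t → C *ᵥ (NormedSpace.exp (t • A) *ᵥ x) = 0) → x = 0) :=
  lyapunov_equation_solution_general A C β hβ Sinf hSinf
end

section
/- Let n ≥ 1, let V : ℝⁿ → ℝ be continuously differentiable with V ≥ 0 and V(0) = 0, and for ρ > 0 write D(ρ) := {x ∈ ℝⁿ : V(x) ≤ ρ}. Let R > 0, η > 0, A₀ ∈ ℝ^{n×n} with a₀ := ‖A₀‖, and t_obs > 0. Assume D((1+η)R) is bounded, let d := diam D(R), let m := sup of |∇V| over the closed convex hull of D((1+η)R), and assume m·(a₀d + R)·t_obs·e^{a₀ t_obs} < ηR. Then for every differentiable x : [τ, τ+t_obs] → ℝⁿ with |x'(t) − A₀x(t)| ≤ R for all t ∈ [τ, τ+t_obs] and V(x(τ)) ≤ R, one has V(x(t)) < (1+η)R for all t ∈ [τ, τ+t_obs]. -/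
/-!
Since `0` and `x τ` both lie in `D(R)`, `‖x τ‖ ≤ d`, and Grönwall's inequality for `‖x‖` bounds the
speed on the whole window by `(a₀ d + R) e^{a₀ t_obs}`. While the trajectory stays in
`D((1+η)R)` the gradient of `V` is bounded by `m`, so `V ∘ x` grows by less than `η R`; hence it
can never reach the level `(1+η)R` for the first time.
-/

open Matrix Set

/-- Inclusion of `Fin n → ℝ` into `EuclideanSpace ℝ (Fin n)` (a definitional identity,
used to select the Euclidean norm). -/
def toEuc {n : ℕ} (v : Fin n → ℝ) : EuclideanSpace ℝ (Fin n) := WithLp.toLp 2 v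

lemma toEuclideanCLM_apply_eq_toEuc {n : ℕ} (A : Matrix (Fin n) (Fin n) ℝ)
    (v : EuclideanSpace ℝ (Fin n)) :
    Matrix.toEuclideanCLM (𝕜 := ℝ) A v = toEuc (A *ᵥ v) :=
  congrArg (WithLp.toLp 2) (Matrix.ofLp_toEuclideanCLM (𝕜 := ℝ) A v)

lemma mul_gronwallBound_add (δ K ε x : ℝ) :
    K * gronwallBound δ K ε x + ε = (K * δ + ε) * Real.exp (K * x) := by
  rcases eq_or_ne K 0 with rfl | hK
  · simp [gronwallBound_K0]
  · rw [gronwallBound_of_K_ne_0 hK]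
    field_simp
    ring

lemma ContinuousOn.forall_lt_of_forall_Ico_lt_imp_lt {f : ℝ → ℝ} {a b c : ℝ}
    (hf : ContinuousOn f (Icc a b))
    (step : ∀ t ∈ Icc a b, (∀ s ∈ Ico a t, f s < c) → f t < c) :
    ∀ t ∈ Icc a b, f t < c := by
  by_contra! hexit
  set S := Icc a b ∩ f ⁻¹' Ici c
  have hS : S.Nonempty := hexit
  have hSbdd : BddBelow S := ⟨a, fun t ht => ht.1.1⟩
  obtain ⟨hfirst_mem, hfirst⟩ : sInf S ∈ S :=
    (hf.preimage_isClosed_of_isClosed isClosed_Icc isClosed_Ici).csInf_mem hS hSbdd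
  refine (step _ hfirst_mem fun s hs => ?_).not_ge hfirst
  by_contra! hs_ge
  exact (csInf_le hSbdd ⟨⟨hs.1, hs.2.le.trans hfirst_mem.2⟩, hs_ge⟩).not_gt hs.2

section Trajectory

variable {E : Type*} [NormedAddCommGroup E] [NormedSpace ℝ E]

/-- Grönwall's inequality applied to `‖x‖`, whose growth rate is at most `‖A‖ ‖x‖ + R`. -/
lemma norm_deriv_le_of_norm_sub_clm_le {A : E →L[ℝ] E} {x x' : ℝ → E} {a T R d : ℝ}
    (hx : ∀ t ∈ Icc a (a + T), HasDerivWithinAt x (x' t) (Icc a (a + T)) t)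
    (hu : ∀ t ∈ Icc a (a + T), ‖x' t - A (x t)‖ ≤ R) (hxa : ‖x a‖ ≤ d) :
    ∀ t ∈ Icc a (a + T), ‖x' t‖ ≤ (‖A‖ * d + R) * Real.exp (‖A‖ * T) := by
  have hvel : ∀ t ∈ Icc a (a + T), ‖x' t‖ ≤ ‖A‖ * ‖x t‖ + R := fun t ht =>
    calc ‖x' t‖ ≤ ‖x' t - A (x t)‖ + ‖A (x t)‖ := norm_le_norm_sub_add _ _
      _ ≤ R + ‖A‖ * ‖x t‖ := add_le_add (hu t ht) (A.le_opNorm _)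
      _ = ‖A‖ * ‖x t‖ + R := add_comm _ _
  have hgronwall := norm_le_gronwallBound_of_norm_deriv_right_le
    (fun t ht => (hx t ht).continuousWithinAt)
    (fun t ht => (hx t (Ico_subset_Icc_self ht)).mono_of_mem_nhdsWithin
      (Icc_mem_nhdsGE_of_mem ht))
    hxa (fun t ht => hvel t (Ico_subset_Icc_self ht))
  intro t ht
  have hR : 0 ≤ R := (norm_nonneg _).trans (hu t ht)
  have hd : 0 ≤ d := (norm_nonneg _).trans hxa
  calc ‖x' t‖ ≤ ‖A‖ * gronwallBound d ‖A‖ R (t - a) + R := by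
        grw [hvel t ht, hgronwall t ht]
    _ = (‖A‖ * d + R) * Real.exp (‖A‖ * (t - a)) := mul_gronwallBound_add _ _ _ _
    _ ≤ (‖A‖ * d + R) * Real.exp (‖A‖ * T) := by
        gcongr
        linarith [ht.2]

lemma sub_le_of_norm_fderiv_le_of_norm_deriv_le {V : E → ℝ} (hV : Differentiable ℝ V)
    {K : Set E} {m C : ℝ} (hVK : ∀ y ∈ K, ‖fderiv ℝ V y‖ ≤ m) {x x' : ℝ → E} {a t : ℝ}
    (hat : a ≤ t) (hx : ∀ s ∈ Icc a t, HasDerivWithinAt x (x' s) (Icc a t) s)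
    (hx' : ∀ s ∈ Ico a t, ‖x' s‖ ≤ C) (hxK : ∀ s ∈ Ico a t, x s ∈ K) :
    V (x t) - V (x a) ≤ m * C * (t - a) := by
  have hderiv : ∀ s ∈ Icc a t,
      HasDerivWithinAt (V ∘ x) (fderiv ℝ V (x s) (x' s)) (Icc a t) s := fun s hs =>
    (hV (x s)).hasFDerivAt.comp_hasDerivWithinAt s (hx s hs)
  have hbound : ∀ s ∈ Ico a t, ‖fderiv ℝ V (x s) (x' s)‖ ≤ m * C := fun s hs =>
    calc ‖fderiv ℝ V (x s) (x' s)‖ ≤ ‖fderiv ℝ V (x s)‖ * ‖x' s‖ :=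
          (fderiv ℝ V (x s)).le_opNorm _
      _ ≤ m * C := mul_le_mul (hVK _ (hxK s hs)) (hx' s hs) (norm_nonneg _)
          ((norm_nonneg _).trans (hVK _ (hxK s hs)))
  exact le_of_abs_le
    (norm_image_sub_le_of_norm_deriv_le_segment' hderiv hbound t (right_mem_Icc.2 hat))

end Trajectory

section Gradient

variable {F : Type*} [NormedAddCommGroup F] [InnerProductSpace ℝ F] [CompleteSpace F]

lemma norm_fderiv_eq_norm_gradient (V : F → ℝ) (y : F) : ‖fderiv ℝ V y‖ = ‖gradient V y‖ := by
  rw [← toDual_gradient, LinearIsometryEquiv.norm_map]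

lemma norm_fderiv_le_sSup_image_norm_gradient {V : F → ℝ} (hV : ContDiff ℝ 1 V) {K : Set F}
    (hK : IsCompact K) {y : F} (hy : y ∈ K) :
    ‖fderiv ℝ V y‖ ≤ sSup ((fun z => ‖gradient V z‖) '' K) := by
  have hcont : Continuous fun z => ‖gradient V z‖ := by
    simpa only [norm_fderiv_eq_norm_gradient] using (hV.continuous_fderiv one_ne_zero).norm
  rw [norm_fderiv_eq_norm_gradient]
  exact le_csSup (hK.bddAbove_image hcont.continuousOn) (mem_image_of_mem _ hy)

end Gradient

theorem lyapunov_small_increase_observation_mode_general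
    {n : ℕ}
    (V : EuclideanSpace ℝ (Fin n) → ℝ) (hV : ContDiff ℝ 1 V)
    (hV0 : V 0 = 0)
    (R η : ℝ) (hR : 0 < R) (hη : 0 < η)
    (A₀ : Matrix (Fin n) (Fin n) ℝ) (a₀ : ℝ)
    (ha₀ : a₀ = ‖Matrix.toEuclideanCLM (𝕜 := ℝ) A₀‖)
    (t_obs : ℝ)
    (hbdd : Bornology.IsBounded {x : EuclideanSpace ℝ (Fin n) | V x ≤ (1 + η) * R})
    (d m : ℝ)
    (hd : d = Metric.diam {x : EuclideanSpace ℝ (Fin n) | V x ≤ R})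
    (hm : m = sSup ((fun x => ‖gradient V x‖) ''
      closure (convexHull ℝ {x : EuclideanSpace ℝ (Fin n) | V x ≤ (1 + η) * R})))
    (hkey : m * (a₀ * d + R) * t_obs * Real.exp (a₀ * t_obs) < η * R)
    (τ : ℝ) (x x' : ℝ → EuclideanSpace ℝ (Fin n))
    (hx : ∀ t ∈ Set.Icc τ (τ + t_obs), HasDerivWithinAt x (x' t) (Set.Icc τ (τ + t_obs)) t)
    (hb : ∀ t ∈ Set.Icc τ (τ + t_obs),
      ‖x' t - toEuc (A₀ *ᵥ x t)‖ ≤ R)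
    (hinit : V (x τ) ≤ R) :
    ∀ t ∈ Set.Icc τ (τ + t_obs), V (x t) < (1 + η) * R := by
  have hsub : {y | V y ≤ R} ⊆ {y | V y ≤ (1 + η) * R} := fun y hy =>
    hy.trans (le_mul_of_one_le_left hR.le (by linarith))
  have hxτ : ‖x τ‖ ≤ d := by
    simpa [hd] using Metric.dist_le_diam_of_mem (hbdd.subset hsub) hinit
      (show V 0 ≤ R from hV0 ▸ hR.le)
  have hvel := norm_deriv_le_of_norm_sub_clm_le hx
    (fun t ht => toEuclideanCLM_apply_eq_toEuc A₀ (x t) ▸ hb t ht) hxτ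
  rw [← ha₀] at hvel
  have hgrad : ∀ y ∈ closure (convexHull ℝ {y | V y ≤ (1 + η) * R}), ‖fderiv ℝ V y‖ ≤ m :=
    fun y hy => hm ▸ norm_fderiv_le_sSup_image_norm_gradient hV
      (isBounded_convexHull.2 hbdd).isCompact_closure hy
  have hm0 : 0 ≤ m := hm ▸ Real.sSup_nonneg (by rintro _ ⟨y, -, rfl⟩; exact norm_nonneg _)
  refine ContinuousOn.forall_lt_of_forall_Ico_lt_imp_lt
    (hV.continuous.comp_continuousOn fun t ht => (hx t ht).continuousWithinAt)
    fun t ht hbelow => ?_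
  have hsubIcc : Icc τ t ⊆ Icc τ (τ + t_obs) := Icc_subset_Icc le_rfl ht.2
  have hincr := sub_le_of_norm_fderiv_le_of_norm_deriv_le (hV.differentiable one_ne_zero) hgrad
    ht.1 (fun s hs => (hx s (hsubIcc hs)).mono hsubIcc)
    (fun s hs => hvel s (hsubIcc (Ico_subset_Icc_self hs)))
    (fun s hs => subset_closure (subset_convexHull ℝ _ (hbelow s hs).le))
  have hC : 0 ≤ a₀ * d + R :=
    add_nonneg (mul_nonneg (ha₀ ▸ norm_nonneg _) ((norm_nonneg _).trans hxτ)) hR.le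
  calc V (x t) ≤ R + m * ((a₀ * d + R) * Real.exp (a₀ * t_obs)) * (t - τ) := by linarith
    _ ≤ R + m * ((a₀ * d + R) * Real.exp (a₀ * t_obs)) * t_obs := by
        gcongr
        linarith [ht.2]
    _ < (1 + η) * R := by linarith

/-- Sublevel sets of a Lyapunov function grow at most by a factor `(1+η)`
during an observation mode: under the quantitative condition
`m(a₀d + R)t_obs e^{a₀t_obs} < ηR` (with `d = diam D(R)`, `m` the sup of `|∇V|` on the
closed convex hull of `D((1+η)R)`), any trajectory with `|x' − A₀x| ≤ R` starting in
`D(R)` stays in the open sublevel set `{V < (1+η)R}` on `[τ, τ+t_obs]`. -/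
theorem lyapunov_small_increase_observation_mode
    {n : ℕ} (hn : 1 ≤ n)
    (V : EuclideanSpace ℝ (Fin n) → ℝ) (hV : ContDiff ℝ 1 V)
    (hVnonneg : ∀ x, 0 ≤ V x) (hV0 : V 0 = 0)
    (R η : ℝ) (hR : 0 < R) (hη : 0 < η)
    (A₀ : Matrix (Fin n) (Fin n) ℝ) (a₀ : ℝ)
    (ha₀ : a₀ = ‖Matrix.toEuclideanCLM (𝕜 := ℝ) A₀‖)
    (t_obs : ℝ) (htobs : 0 < t_obs)
    (hbdd : Bornology.IsBounded {x : EuclideanSpace ℝ (Fin n) | V x ≤ (1 + η) * R})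
    (d m : ℝ)
    (hd : d = Metric.diam {x : EuclideanSpace ℝ (Fin n) | V x ≤ R})
    (hm : m = sSup ((fun x => ‖gradient V x‖) ''
      closure (convexHull ℝ {x : EuclideanSpace ℝ (Fin n) | V x ≤ (1 + η) * R})))
    (hkey : m * (a₀ * d + R) * t_obs * Real.exp (a₀ * t_obs) < η * R)
    (τ : ℝ) (x x' : ℝ → EuclideanSpace ℝ (Fin n))
    (hx : ∀ t ∈ Set.Icc τ (τ + t_obs), HasDerivWithinAt x (x' t) (Set.Icc τ (τ + t_obs)) t)
    (hb : ∀ t ∈ Set.Icc τ (τ + t_obs),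
      ‖x' t - toEuc (A₀ *ᵥ x t)‖ ≤ R)
    (hinit : V (x τ) ≤ R) :
    ∀ t ∈ Set.Icc τ (τ + t_obs), V (x t) < (1 + η) * R :=
  lyapunov_small_increase_observation_mode_general V hV hV0 R η hR hη A₀ a₀ ha₀ t_obs hbdd d m hd hm
    hkey τ x x' hx hb hinit
end

section
/- Let n ≥ 1, C ∈ ℝ^{1×n}, let A : ℝ → ℝ^{n×n} and B : ℝ → ℝⁿ be locally Lipschitz, let u : [t₀,t₁] → ℝ be measurable and bounded, and suppose there exists g > 0 such that every absolutely continuous ω : [t₀,t₁] → ℝⁿ with ω'(t) = A(u(t))ω(t) for almost every t satisfies ∫_{t₀}^{t₁} |Cω(s)|² ds ≥ g|ω(t₁)|² (positive-definiteness of the observability Gramian of u). Then the system is observable for u on [t₀,t₁]: for any two absolutely continuous x_a, x_b : [t₀,t₁] → ℝⁿ satisfying x'(t) = A(u(t))x(t) + B(u(t)) for almost every t, if Cx_a(t) = Cx_b(t) for all t ∈ [t₀,t₁], then x_a(t) = x_b(t) for all t ∈ [t₀,t₁]. -/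
/-!
The difference `ω = x_a - x_b` of two solutions with the same output solves the homogeneous
equation `ω' = A(u)ω` and has `Cω ≡ 0`, so positivity of the Gramian forces `ω(t₁) = 0`.
A solution of a linear equation whose coefficient is bounded by `K` and which vanishes at the
final time vanishes identically: `‖ω(t)‖ ≤ K ∫_t^{t₁} ‖ω‖`, and iterating this estimate gives
`‖ω(t)‖ ≤ S (K (t₁ - t))ᵏ / k! → 0`, where `S` bounds `‖ω‖`.
-/

open Matrix Set

open Filter Topology MeasureTheory
open scoped Nat

section Gronwall

variable {f : ℝ → ℝ} {a b K : ℝ}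

lemma integral_sub_pow (b t : ℝ) (k : ℕ) :
    ∫ s in t..b, (b - s) ^ k = (b - t) ^ (k + 1) / (k + 1) := by
  rw [intervalIntegral.integral_comp_sub_left (fun x => x ^ k) b, sub_self, integral_pow]
  ring

lemma le_mul_pow_div_factorial_of_le_mul_integral (hK : 0 ≤ K) (hf : ContinuousOn f (Icc a b))
    {S : ℝ} (hS : ∀ t ∈ Icc a b, f t ≤ S) (h : ∀ t ∈ Icc a b, f t ≤ K * ∫ s in t..b, f s)
    (k : ℕ) : ∀ t ∈ Icc a b, f t ≤ S * (K * (b - t)) ^ k / k ! := by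
  induction k with
  | zero => simpa using hS
  | succ k ih =>
    intro t ht
    have hsub : Icc t b ⊆ Icc a b := Icc_subset_Icc_left ht.1
    have hint : ∫ s in t..b, f s ≤ ∫ s in t..b, S * K ^ k / k ! * (b - s) ^ k := by
      refine intervalIntegral.integral_mono_on ht.2 ?_
        ((by fun_prop : Continuous _).intervalIntegrable _ _) fun s hs => ?_
      · exact (hf.mono (uIcc_of_le ht.2 ▸ hsub)).intervalIntegrable
      · calc f s ≤ S * (K * (b - s)) ^ k / k ! := ih s (hsub hs)
          _ = S * K ^ k / k ! * (b - s) ^ k := by rw [mul_pow]; ring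
    calc f t ≤ K * ∫ s in t..b, f s := h t ht
      _ ≤ K * ∫ s in t..b, S * K ^ k / k ! * (b - s) ^ k := by gcongr
      _ = S * (K * (b - t)) ^ (k + 1) / (k + 1)! := by
        rw [intervalIntegral.integral_const_mul, integral_sub_pow, Nat.factorial_succ, mul_pow]
        push_cast
        field_simp
        ring

lemma nonpos_of_le_mul_integral (hK : 0 ≤ K) (hf : ContinuousOn f (Icc a b))
    (h : ∀ t ∈ Icc a b, f t ≤ K * ∫ s in t..b, f s) : ∀ t ∈ Icc a b, f t ≤ 0 := by
  intro t ht
  obtain ⟨S, hS⟩ := isCompact_Icc.bddAbove_image hf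
  have hlim : Tendsto (fun k : ℕ => S * (K * (b - t)) ^ k / k !) atTop (𝓝 0) := by
    simpa [mul_div_assoc] using
      (FloorSemiring.tendsto_pow_div_factorial_atTop (K * (b - t))).const_mul S
  exact ge_of_tendsto hlim <| .of_forall fun k =>
    le_mul_pow_div_factorial_of_le_mul_integral hK hf (fun s hs => hS ⟨s, hs, rfl⟩) h k t ht

end Gronwall

section LinearIntegralEquation

variable {E : Type*} [NormedAddCommGroup E] {a b R K : ℝ}

lemma exists_norm_comp_le {α : Type*} {F : ℝ → E} (hF : Continuous F) {u : α → ℝ} {s : Set α}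
    {M : ℝ} (hu : ∀ t ∈ s, |u t| ≤ M) : ∃ R, ∀ t ∈ s, ‖F (u t)‖ ≤ R := by
  obtain ⟨R, hR⟩ := isCompact_Icc.exists_bound_of_continuousOn hF.continuousOn
  exact ⟨R, fun t ht => hR _ (abs_le.1 (hu t ht))⟩

lemma intervalIntegrable_of_norm_le (hab : a ≤ b) {f : ℝ → E}
    (hf : AEStronglyMeasurable f (volume.restrict (Icc a b))) (hR : ∀ s ∈ Icc a b, ‖f s‖ ≤ R) :
    IntervalIntegrable f volume a b := by
  refine IntegrableOn.intervalIntegrable ?_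
  rw [uIcc_of_le hab]
  exact Integrable.of_bound hf R ((ae_restrict_iff' measurableSet_Icc).2 (.of_forall hR))

variable [NormedSpace ℝ E] {L : ℝ → E →L[ℝ] E}

lemma intervalIntegrable_clm_apply (hab : a ≤ b)
    (hL : AEStronglyMeasurable L (volume.restrict (Icc a b))) (hLK : ∀ s ∈ Icc a b, ‖L s‖ ≤ K)
    {x : ℝ → E} (hx : ContinuousOn x (Icc a b)) :
    IntervalIntegrable (fun s => L s (x s)) volume a b := by
  obtain ⟨W, hW⟩ := isCompact_Icc.exists_bound_of_continuousOn hx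
  refine intervalIntegrable_of_norm_le (R := K * W) hab
    ((ContinuousLinearMap.id ℝ (E →L[ℝ] E)).aestronglyMeasurable_comp₂ hL
      (hx.aestronglyMeasurable measurableSet_Icc)) fun s hs => ?_
  exact (L s).le_of_opNorm_le_of_le (hLK s hs) (hW s hs)

lemma sub_eq_sub_add_integral_of_eq_add_integral {x y c : ℝ → E} {t : ℝ}
    (hx : IntervalIntegrable (fun s => L s (x s) + c s) volume a t)
    (hy : IntervalIntegrable (fun s => L s (y s) + c s) volume a t)
    (hxt : x t = x a + ∫ s in a..t, L s (x s) + c s)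
    (hyt : y t = y a + ∫ s in a..t, L s (y s) + c s) :
    x t - y t = x a - y a + ∫ s in a..t, L s (x s - y s) := by
  rw [hxt, hyt, add_sub_add_comm, ← intervalIntegral.integral_sub hx hy]
  simp only [add_sub_add_right_eq_sub, map_sub]

lemma eq_zero_of_eq_integral_of_eq_zero_right
    (hL : AEStronglyMeasurable L (volume.restrict (Icc a b))) (hLK : ∀ s ∈ Icc a b, ‖L s‖ ≤ K)
    {ω : ℝ → E} (hω : ContinuousOn ω (Icc a b))
    (heq : ∀ t ∈ Icc a b, ω t = ω a + ∫ s in a..t, L s (ω s)) (hb : ω b = 0) :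
    ∀ t ∈ Icc a b, ω t = 0 := by
  intro t ht
  have hab : a ≤ b := ht.1.trans ht.2
  have hint := intervalIntegrable_clm_apply hab hL hLK hω
  have hK : 0 ≤ K := (norm_nonneg _).trans (hLK t ht)
  have hbound : ∀ t ∈ Icc a b, ‖ω t‖ ≤ K * ∫ s in t..b, ‖ω s‖ := by
    intro t ht
    have hsub : uIcc t b ⊆ uIcc a b := uIcc_subset_uIcc (Icc_subset_uIcc ht) right_mem_uIcc
    have hω_eq : ω t = -∫ s in t..b, L s (ω s) := by
      have hsplit := intervalIntegral.integral_add_adjacent_intervals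
        (hint.mono_set (uIcc_subset_uIcc_left (Icc_subset_uIcc ht)))
        (hint.mono_set (uIcc_subset_uIcc_right (Icc_subset_uIcc ht)))
      rw [eq_neg_iff_add_eq_zero, heq t ht, add_assoc, hsplit, ← heq b ⟨hab, le_rfl⟩, hb]
    calc ‖ω t‖ = ‖∫ s in t..b, L s (ω s)‖ := by rw [hω_eq, norm_neg]
      _ ≤ ∫ s in t..b, ‖L s (ω s)‖ := intervalIntegral.norm_integral_le_integral_norm ht.2
      _ ≤ ∫ s in t..b, K * ‖ω s‖ := by
        have hIcc : Icc t b ⊆ Icc a b := Icc_subset_Icc_left ht.1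
        refine intervalIntegral.integral_mono_on ht.2 (hint.mono_set hsub).norm ?_ fun s hs => ?_
        · exact (continuousOn_const.mul (hω.mono (uIcc_of_le ht.2 ▸ hIcc)).norm).intervalIntegrable
        · exact (L s).le_of_opNorm_le_of_le (hLK s (hIcc hs)) le_rfl
      _ = K * ∫ s in t..b, ‖ω s‖ := intervalIntegral.integral_const_mul _ _
  exact norm_le_zero_iff.1 (nonpos_of_le_mul_integral hK hω.norm hbound t ht)

end LinearIntegralEquation

theorem gramian_posDef_implies_observable_general
    {n : ℕ} (C : Matrix (Fin 1) (Fin n) ℝ)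
    (A : ℝ → Matrix (Fin n) (Fin n) ℝ) (B : ℝ → Fin n → ℝ)
    (hA : LocallyLipschitz (fun u => Matrix.of.symm (A u)))
    (hB : LocallyLipschitz B)
    (t₀ t₁ : ℝ) (ht : t₀ ≤ t₁)
    (u : ℝ → ℝ) (hu : Measurable u) (M : ℝ) (huM : ∀ t ∈ Set.Icc t₀ t₁, |u t| ≤ M)
    (g : ℝ) (hg : 0 < g)
    (hgram : ∀ ω : ℝ → EuclideanSpace ℝ (Fin n),
      ContinuousOn ω (Set.Icc t₀ t₁) →
      (∀ t ∈ Set.Icc t₀ t₁,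
        ω t = ω t₀ + ∫ s in t₀..t, toEuc (A (u s) *ᵥ ω s)) →
      g * ‖ω t₁‖ ^ 2 ≤ ∫ s in t₀..t₁, ((C *ᵥ ω s) 0) ^ 2)
    (xa xb : ℝ → EuclideanSpace ℝ (Fin n))
    (hxa : ContinuousOn xa (Set.Icc t₀ t₁))
    (hxb : ContinuousOn xb (Set.Icc t₀ t₁))
    (hxaeq : ∀ t ∈ Set.Icc t₀ t₁,
      xa t = xa t₀ + ∫ s in t₀..t, toEuc (A (u s) *ᵥ xa s + B (u s)))
    (hxbeq : ∀ t ∈ Set.Icc t₀ t₁,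
      xb t = xb t₀ + ∫ s in t₀..t, toEuc (A (u s) *ᵥ xb s + B (u s)))
    (hy : ∀ t ∈ Set.Icc t₀ t₁, C *ᵥ xa t = C *ᵥ xb t) :
    ∀ t ∈ Set.Icc t₀ t₁, xa t = xb t := by
  let L s : EuclideanSpace ℝ (Fin n) →L[ℝ] EuclideanSpace ℝ (Fin n) :=
    Matrix.toEuclideanCLM (𝕜 := ℝ) (A (u s))
  let c s : EuclideanSpace ℝ (Fin n) := toEuc (B (u s))
  have hLc : Continuous (Matrix.toEuclideanCLM (𝕜 := ℝ) (n := Fin n)) :=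
    LinearMap.continuous_of_finiteDimensional
      (Matrix.toEuclideanCLM (𝕜 := ℝ) (n := Fin n)).toAlgEquiv.toLinearMap
  have hcc : Continuous (toEuc (n := n)) := PiLp.continuous_toLp 2 _
  have hL : AEStronglyMeasurable L (volume.restrict (Icc t₀ t₁)) :=
    (hLc.comp hA.continuous).comp_aestronglyMeasurable hu.aestronglyMeasurable
  have hcm : AEStronglyMeasurable c (volume.restrict (Icc t₀ t₁)) :=
    (hcc.comp hB.continuous).comp_aestronglyMeasurable hu.aestronglyMeasurable
  obtain ⟨K, hLK⟩ := exists_norm_comp_le (hLc.comp hA.continuous) huM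
  obtain ⟨R, hcR⟩ := exists_norm_comp_le (hcc.comp hB.continuous) huM
  have hint : ∀ x, ContinuousOn x (Icc t₀ t₁) →
      IntervalIntegrable (fun s => L s (x s) + c s) volume t₀ t₁ := fun x hx =>
    (intervalIntegrable_clm_apply ht hL hLK hx).add (intervalIntegrable_of_norm_le ht hcm hcR)
  -- `toEuc (A (u s) *ᵥ v + B (u s))` is definitionally `L s v + c s`.
  have hω : ∀ t ∈ Icc t₀ t₁,
      (xa - xb) t = (xa - xb) t₀ + ∫ s in t₀..t, toEuc (A (u s) *ᵥ (xa - xb) s) :=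
    fun t htt => sub_eq_sub_add_integral_of_eq_add_integral
      ((hint xa hxa).mono_set (uIcc_subset_uIcc_left (Icc_subset_uIcc htt)))
      ((hint xb hxb).mono_set (uIcc_subset_uIcc_left (Icc_subset_uIcc htt)))
      (hxaeq t htt) (hxbeq t htt)
  have hCω : ∫ s in t₀..t₁, ((C *ᵥ (xa - xb) s) 0) ^ 2 = 0 := by
    refine intervalIntegral.integral_zero_ae (.of_forall fun s hs => ?_)
    have hs' : s ∈ Icc t₀ t₁ := Ioc_subset_Icc_self (uIoc_of_le ht ▸ hs)
    rw [Pi.sub_apply, WithLp.ofLp_sub, mulVec_sub, hy s hs', sub_self, Pi.zero_apply, sq,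
      mul_zero]
  have hω₁ : (xa - xb) t₁ = 0 := by
    have hgram₁ := hCω ▸ hgram _ (hxa.sub hxb) hω
    exact norm_eq_zero.1 (pow_eq_zero_iff two_ne_zero |>.1 <|
      le_antisymm (nonpos_of_mul_nonpos_right hgram₁ hg) (sq_nonneg _))
  intro t htt
  exact sub_eq_zero.1 (eq_zero_of_eq_integral_of_eq_zero_right hL hLK (hxa.sub hxb) hω hω₁ t htt)

/-- If the observability Gramian of a measurable bounded input `u` on
`[t₀,t₁]` is positive definite — i.e. every absolutely continuous solution of
`ω' = A(u(t))ω` (encoded by its integral equation) satisfies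
`∫_{t₀}^{t₁} |Cω|² ds ≥ g|ω(t₁)|²` for some `g > 0` — then the state-affine system
`x' = A(u(t))x + B(u(t))`, `y = Cx` is observable for `u` on `[t₀,t₁]`: two solutions
with the same output coincide. -/
theorem gramian_posDef_implies_observable
    {n : ℕ} (hn : 1 ≤ n) (C : Matrix (Fin 1) (Fin n) ℝ)
    (A : ℝ → Matrix (Fin n) (Fin n) ℝ) (B : ℝ → Fin n → ℝ)
    (hA : LocallyLipschitz (fun u => Matrix.of.symm (A u)))
    (hB : LocallyLipschitz B)
    (t₀ t₁ : ℝ) (ht : t₀ ≤ t₁)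
    (u : ℝ → ℝ) (hu : Measurable u) (M : ℝ) (huM : ∀ t ∈ Set.Icc t₀ t₁, |u t| ≤ M)
    (g : ℝ) (hg : 0 < g)
    (hgram : ∀ ω : ℝ → EuclideanSpace ℝ (Fin n),
      ContinuousOn ω (Set.Icc t₀ t₁) →
      (∀ t ∈ Set.Icc t₀ t₁,
        ω t = ω t₀ + ∫ s in t₀..t, toEuc (A (u s) *ᵥ ω s)) →
      g * ‖ω t₁‖ ^ 2 ≤ ∫ s in t₀..t₁, ((C *ᵥ ω s) 0) ^ 2)
    (xa xb : ℝ → EuclideanSpace ℝ (Fin n))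
    (hxa : ContinuousOn xa (Set.Icc t₀ t₁))
    (hxb : ContinuousOn xb (Set.Icc t₀ t₁))
    (hxaeq : ∀ t ∈ Set.Icc t₀ t₁,
      xa t = xa t₀ + ∫ s in t₀..t, toEuc (A (u s) *ᵥ xa s + B (u s)))
    (hxbeq : ∀ t ∈ Set.Icc t₀ t₁,
      xb t = xb t₀ + ∫ s in t₀..t, toEuc (A (u s) *ᵥ xb s + B (u s)))
    (hy : ∀ t ∈ Set.Icc t₀ t₁, C *ᵥ xa t = C *ᵥ xb t) :
    ∀ t ∈ Set.Icc t₀ t₁, xa t = xb t :=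
  gramian_posDef_implies_observable_general C A B hA hB t₀ t₁ ht u hu M huM g hg hgram xa xb hxa hxb
    hxaeq hxbeq hy
end
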